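/- arXiv:1302.3695 — 5 statements merged into one kernel-verified Lean document; each statement's English description precedes it below -/
import Mathlib

section
/- Let 0 < T < ∞ and let φ : [0, T] → ℂ be integrable with φ(t) = (T - t)^σ h(T - t), where Re σ > -1, h(0) ≠ 0, and h is differentiable with bounded derivative in a neighborhood of 0. Then Φ(λ) = ∫_0^T φ(t) e^{λ t} dt satisfies Φ(λ) = h(0) Γ(σ+1) λ^{-σ-1} e^{Tλ} + O(λ^{-σ-2} e^{Tλ}) as λ → ∞ with |arg λ| ≤ θ for any fixed 0 ≤ θ < π/2. -/
/-!
After the substitution `u = T - t` the integral is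
`exp (T λ) ∫₀ᵀ u ^ σ h(u) exp (-λ u) du`.
Since `h u - h 0 = O(u)` near `0` by the mean value theorem, the part of the integral carrying
`h u - h 0` is `O((re λ) ^ (-(re σ + 2)))`, the part away from `0` being exponentially small.
The part carrying `h 0` is `h 0 Γ(σ + 1) λ ^ (-σ - 1)` up to the exponentially small tail
`∫_T^∞`: the Gamma integral with complex rate `λ` follows from the real one by analytic
continuation in `λ`. In the sector, `re λ ≥ cos θ ‖λ‖`, and `‖λ ^ (-σ - 2)‖` is comparable to
`‖λ‖ ^ (-(re σ + 2))` because `arg λ` is bounded.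
-/

open MeasureTheory intervalIntegral Complex Filter Asymptotics

open Set Topology

lemma norm_cexp_neg_mul_ofReal (z : ℂ) (t : ℝ) :
    ‖cexp (-(z * t))‖ = Real.exp (-(z.re * t)) := by
  simp [Complex.norm_exp]

lemma norm_cpow_mul_cexp_neg_mul {t : ℝ} (ht : 0 < t) (σ z : ℂ) :
    ‖(t : ℂ) ^ σ * cexp (-(z * t))‖ = t ^ σ.re * Real.exp (-(z.re * t)) := by
  rw [norm_mul, norm_cpow_eq_rpow_re_of_pos ht, norm_cexp_neg_mul_ofReal]

lemma integrableOn_rpow_mul_exp_neg_mul_Ioi {b r : ℝ} (hb : -1 < b) (hr : 0 < r) :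
    IntegrableOn (fun t : ℝ => t ^ b * Real.exp (-(r * t))) (Ioi 0) := by
  simpa only [Real.rpow_one, neg_mul] using integrableOn_rpow_mul_exp_neg_mul_rpow hb one_pos hr

lemma aestronglyMeasurable_cpow_mul_cexp_neg_mul (σ z : ℂ) :
    AEStronglyMeasurable (fun t : ℝ => (t : ℂ) ^ σ * cexp (-(z * t)))
      (volume.restrict (Ioi 0)) :=
  ContinuousOn.aestronglyMeasurable (fun t ht => ContinuousAt.continuousWithinAt <|
    (continuousAt_ofReal_cpow_const t σ (Or.inr (ne_of_gt ht))).mul (by fun_prop))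
    measurableSet_Ioi

lemma integrableOn_cpow_mul_cexp_neg_mul_Ioi {σ z : ℂ} (hσ : -1 < σ.re) (hz : 0 < z.re) :
    IntegrableOn (fun t : ℝ => (t : ℂ) ^ σ * cexp (-(z * t))) (Ioi 0) := by
  refine (integrableOn_rpow_mul_exp_neg_mul_Ioi hσ hz).mono'
    (aestronglyMeasurable_cpow_mul_cexp_neg_mul σ z) ?_
  filter_upwards [ae_restrict_mem measurableSet_Ioi] with t ht
  rw [norm_cpow_mul_cexp_neg_mul ht]

lemma hasDerivAt_integral_cpow_mul_cexp_neg_mul {σ z : ℂ} (hσ : -1 < σ.re) (hz : 0 < z.re) :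
    HasDerivAt (fun w : ℂ => ∫ t in Ioi (0 : ℝ), (t : ℂ) ^ σ * cexp (-(w * t)))
      (∫ t in Ioi (0 : ℝ), -((t : ℂ) ^ (σ + 1) * cexp (-(z * t)))) z := by
  have hε : 0 < z.re / 2 := by positivity
  refine (hasDerivAt_integral_of_dominated_loc_of_deriv_le
    (F' := fun w (t : ℝ) => -((t : ℂ) ^ (σ + 1) * cexp (-(w * t))))
    (bound := fun t : ℝ => t ^ (σ.re + 1) * Real.exp (-(z.re / 2 * t)))
    (Metric.ball_mem_nhds z hε) (Eventually.of_forall fun w =>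
      aestronglyMeasurable_cpow_mul_cexp_neg_mul σ w)
    (integrableOn_cpow_mul_cexp_neg_mul_Ioi hσ hz)
    (aestronglyMeasurable_cpow_mul_cexp_neg_mul (σ + 1) z).neg ?_
    (integrableOn_rpow_mul_exp_neg_mul_Ioi (by linarith) hε) ?_).2
  · filter_upwards [ae_restrict_mem measurableSet_Ioi] with t (ht : 0 < t) w hw
    have hwre : z.re / 2 ≤ w.re := by
      have := (abs_re_le_norm (w - z)).trans_lt (mem_ball_iff_norm.mp hw)
      rw [sub_re, abs_lt] at this
      linarith
    rw [norm_neg, norm_cpow_mul_cexp_neg_mul ht, add_re, one_re]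
    gcongr
  · filter_upwards [ae_restrict_mem measurableSet_Ioi] with t (ht : 0 < t) w _
    have hpow : (t : ℂ) ^ (σ + 1) = (t : ℂ) ^ σ * t := by
      rw [cpow_add _ _ (ofReal_ne_zero.mpr ht.ne'), cpow_one]
    refine ((hasDerivAt_mul_const (t : ℂ)).neg.cexp.const_mul ((t : ℂ) ^ σ)).congr_deriv ?_
    simp only [hpow, Pi.neg_apply]
    ring

lemma integral_cpow_mul_cexp_neg_mul_Ioi {σ z : ℂ} (hσ : -1 < σ.re) (hz : 0 < z.re) :
    ∫ t in Ioi (0 : ℝ), (t : ℂ) ^ σ * cexp (-(z * t)) =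
      Gamma (σ + 1) * z ^ (-(σ + 1)) := by
  let U : Set ℂ := {w | 0 < w.re}
  have hU : IsOpen U := isOpen_lt continuous_const continuous_re
  have hlhs : AnalyticOnNhd ℂ
      (fun w : ℂ => ∫ t in Ioi (0 : ℝ), (t : ℂ) ^ σ * cexp (-(w * t))) U :=
    DifferentiableOn.analyticOnNhd (fun w hw =>
      (hasDerivAt_integral_cpow_mul_cexp_neg_mul hσ hw).differentiableAt.differentiableWithinAt) hU
  have hrhs : AnalyticOnNhd ℂ (fun w : ℂ => Gamma (σ + 1) * w ^ (-(σ + 1))) U :=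
    DifferentiableOn.analyticOnNhd (fun w hw =>
      ((differentiableAt_id.cpow_const (Or.inl hw)).const_mul _).differentiableWithinAt) hU
  have hreal : ∀ᶠ x : ℝ in 𝓝[≠] 1,
      ∫ t in Ioi (0 : ℝ), (t : ℂ) ^ σ * cexp (-(x * t)) = Gamma (σ + 1) * (x : ℂ) ^ (-(σ + 1)) := by
    filter_upwards [nhdsWithin_le_nhds (eventually_gt_nhds zero_lt_one)] with x hx
    have := integral_cpow_mul_exp_neg_mul_Ioi (a := σ + 1) (by simp; linarith) hx
    rw [add_sub_cancel_right] at this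
    rw [this, mul_comm, one_div,
      inv_cpow _ _ (by simp [arg_ofReal_of_nonneg hx.le, Real.pi_ne_zero.symm]), cpow_neg]
  have hofReal : Tendsto ((↑) : ℝ → ℂ) (𝓝[≠] 1) (𝓝[≠] 1) :=
    continuous_ofReal.continuousWithinAt.tendsto_nhdsWithin fun _ hx => by simpa using hx
  exact hlhs.eqOn_of_preconnected_of_frequently_eq hrhs (convex_halfSpace_re_gt 0).isPreconnected
    (by simp [U]) (hofReal.frequently hreal.frequently) hz

lemma integrableOn_mul_cexp_neg_mul {g : ℝ → ℂ} {s : Set ℝ} (hg : IntegrableOn g s)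
    (hs : MeasurableSet s) (hs0 : s ⊆ Ici 0) {z : ℂ} (hz : 0 ≤ z.re) :
    IntegrableOn (fun u => g u * cexp (-(z * u))) s := by
  refine Integrable.mul_bdd (c := 1) hg
    (by fun_prop : Continuous fun u : ℝ => cexp (-(z * u))).aestronglyMeasurable ?_
  filter_upwards [ae_restrict_mem hs] with u hu
  rw [norm_cexp_neg_mul_ofReal, Real.exp_le_one_iff, neg_nonpos]
  exact mul_nonneg hz (hs0 hu)

lemma norm_integral_mul_cexp_neg_mul_le {g : ℝ → ℂ} {T δ M b : ℝ} {z : ℂ} (hb : -1 < b)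
    (hM : 0 ≤ M) (hδ : 0 ≤ δ) (hδT : δ ≤ T) (hg : IntegrableOn g (Ioc 0 T))
    (hgδ : ∀ u ∈ Ioc 0 δ, ‖g u‖ ≤ M * u ^ b) (hz : 0 < z.re) :
    ‖∫ u in Ioc 0 T, g u * cexp (-(z * u))‖ ≤
      M * Real.Gamma (b + 1) * z.re ^ (-(b + 1)) +
        (∫ u in Ioc δ T, ‖g u‖) * Real.exp (-(z.re * δ)) := by
  have hgz := integrableOn_mul_cexp_neg_mul hg measurableSet_Ioc
    (Ioc_subset_Ioi_self.trans Ioi_subset_Ici_self) hz.le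
  rw [← Ioc_union_Ioc_eq_Ioc hδ hδT, setIntegral_union (Ioc_disjoint_Ioc_of_le le_rfl)
    measurableSet_Ioc (hgz.mono_set (Ioc_subset_Ioc_right hδT))
    (hgz.mono_set (Ioc_subset_Ioc_left hδ))]
  refine (norm_add_le _ _).trans (add_le_add ?_ ?_)
  · have hint := integrableOn_rpow_mul_exp_neg_mul_Ioi hb hz
    calc ‖∫ u in Ioc 0 δ, g u * cexp (-(z * u))‖
        ≤ ∫ u in Ioc 0 δ, M * (u ^ b * Real.exp (-(z.re * u))) := by
          refine norm_integral_le_of_norm_le ((hint.mono_set Ioc_subset_Ioi_self).const_mul M) ?_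
          filter_upwards [ae_restrict_mem measurableSet_Ioc] with u hu
          rw [norm_mul, norm_cexp_neg_mul_ofReal, ← mul_assoc]
          gcongr
          exact hgδ u hu
      _ ≤ M * ∫ u in Ioi 0, u ^ b * Real.exp (-(z.re * u)) := by
          rw [MeasureTheory.integral_const_mul]
          refine mul_le_mul_of_nonneg_left (setIntegral_mono_set hint ?_
            Ioc_subset_Ioi_self.eventuallyLE) hM
          filter_upwards [ae_restrict_mem measurableSet_Ioi] with u (hu : 0 < u)
          positivity
      _ = M * Real.Gamma (b + 1) * z.re ^ (-(b + 1)) := by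
          rw [← add_sub_cancel_right b 1, Real.integral_rpow_mul_exp_neg_mul_Ioi (by linarith) hz,
            add_sub_cancel_right, one_div, Real.inv_rpow hz.le, ← Real.rpow_neg hz.le]
          ring
  · calc ‖∫ u in Ioc δ T, g u * cexp (-(z * u))‖
        ≤ ∫ u in Ioc δ T, ‖g u‖ * Real.exp (-(z.re * δ)) := by
          refine norm_integral_le_of_norm_le
            ((hg.mono_set (Ioc_subset_Ioc_left hδ)).norm.mul_const _) ?_
          filter_upwards [ae_restrict_mem measurableSet_Ioc] with u hu
          rw [norm_mul, norm_cexp_neg_mul_ofReal]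
          gcongr
          exact hu.1.le
      _ = (∫ u in Ioc δ T, ‖g u‖) * Real.exp (-(z.re * δ)) :=
          MeasureTheory.integral_mul_const _ _

lemma isBigO_integral_mul_cexp_neg_mul {g : ℝ → ℂ} {T δ M b : ℝ} (hb : -1 < b) (hM : 0 ≤ M)
    (hδ : 0 < δ) (hδT : δ ≤ T) (hg : IntegrableOn g (Ioc 0 T))
    (hgδ : ∀ u ∈ Ioc 0 δ, ‖g u‖ ≤ M * u ^ b) :
    (fun z : ℂ => ∫ u in Ioc 0 T, g u * cexp (-(z * u)))
      =O[comap re atTop] fun z => z.re ^ (-(b + 1)) := by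
  set K := ∫ u in Ioc δ T, ‖g u‖
  have hre : Tendsto re (comap re atTop) atTop := tendsto_comap
  have hbound : (fun z : ℂ => ∫ u in Ioc 0 T, g u * cexp (-(z * u))) =O[comap re atTop]
      fun z => M * Real.Gamma (b + 1) * z.re ^ (-(b + 1)) + K * Real.exp (-(z.re * δ)) := by
    refine IsBigO.of_bound 1 ?_
    filter_upwards [hre.eventually_gt_atTop 0] with z hz
    rw [one_mul]
    exact (norm_integral_mul_cexp_neg_mul_le hb hM hδ.le hδT hg hgδ hz).trans (le_abs_self _)
  refine hbound.trans (((isBigO_refl _ _).const_mul_left _).add ?_)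
  refine IsBigO.const_mul_left ?_ K
  have := (isLittleO_exp_neg_mul_rpow_atTop hδ (-(b + 1))).isBigO.comp_tendsto hre
  simpa only [Function.comp_def, neg_mul, mul_comm δ] using this

lemma isBigO_integral_Ioi_cpow_mul_cexp_neg_mul {σ : ℂ} {T : ℝ} (hσ : -1 < σ.re) (hT : 0 < T)
    (c : ℝ) :
    (fun z : ℂ => ∫ u in Ioi T, (u : ℂ) ^ σ * cexp (-(z * u)))
      =O[comap re atTop] fun z => z.re ^ c := by
  have hre : Tendsto re (comap re atTop) atTop := tendsto_comap
  have hK := (integrableOn_rpow_mul_exp_neg_mul_Ioi hσ one_pos).mono_set (Ioi_subset_Ioi hT.le)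
  refine IsBigO.trans (g := fun z : ℂ => Real.exp (-T * z.re)) ?_
    ((isLittleO_exp_neg_mul_rpow_atTop hT c).isBigO.comp_tendsto hre)
  refine IsBigO.of_bound ((∫ u in Ioi T, u ^ σ.re * Real.exp (-(1 * u))) * Real.exp T) ?_
  filter_upwards [hre.eventually_ge_atTop 1] with z hz
  calc ‖∫ u in Ioi T, (u : ℂ) ^ σ * cexp (-(z * u))‖
      ≤ ∫ u in Ioi T,
          u ^ σ.re * Real.exp (-(1 * u)) * (Real.exp T * Real.exp (-T * z.re)) := by
        refine norm_integral_le_of_norm_le (hK.mul_const _) ?_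
        filter_upwards [ae_restrict_mem measurableSet_Ioi] with u (hu : T < u)
        have hu0 : 0 < u := hT.trans hu
        rw [norm_cpow_mul_cexp_neg_mul hu0, mul_assoc, ← Real.exp_add, ← Real.exp_add]
        gcongr
        nlinarith
    _ = _ := by
        rw [MeasureTheory.integral_mul_const, Real.norm_of_nonneg (Real.exp_pos _).le]
        ring

lemma cos_mul_norm_le_re {z : ℂ} {θ : ℝ} (hθ : θ ≤ Real.pi) (hz : |arg z| ≤ θ) :
    Real.cos θ * ‖z‖ ≤ z.re := by
  rw [← norm_mul_cos_arg, mul_comm, ← Real.cos_abs (arg z)]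
  exact mul_le_mul_of_nonneg_left
    (Real.cos_le_cos_of_nonneg_of_le_pi (abs_nonneg _) hθ hz) (norm_nonneg z)

lemma tendsto_re_comap_norm_atTop_inf_sector {θ : ℝ} (hθ₀ : 0 ≤ θ) (hθ : θ < Real.pi / 2) :
    Tendsto re (comap (‖·‖) atTop ⊓ 𝓟 {z : ℂ | |arg z| ≤ θ}) atTop := by
  have hcos : 0 < Real.cos θ := Real.cos_pos_of_mem_Ioo ⟨by linarith [Real.pi_pos], hθ⟩
  refine tendsto_atTop_mono' _ ?_ ((tendsto_comap.const_mul_atTop hcos).mono_left inf_le_left)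
  filter_upwards [mem_inf_of_right (mem_principal_self _)] with z hz
  exact cos_mul_norm_le_re (by linarith [Real.pi_pos]) hz

lemma isBigO_re_rpow_norm_rpow_sector {θ c : ℝ} (hθ₀ : 0 ≤ θ) (hθ : θ < Real.pi / 2)
    (hc : c ≤ 0) :
    (fun z : ℂ => z.re ^ c) =O[comap (‖·‖) atTop ⊓ 𝓟 {z : ℂ | |arg z| ≤ θ}]
      fun z => ‖z‖ ^ c := by
  have hcos : 0 < Real.cos θ := Real.cos_pos_of_mem_Ioo ⟨by linarith [Real.pi_pos], hθ⟩
  refine IsBigO.of_bound (Real.cos θ ^ c) ?_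
  filter_upwards [mem_inf_of_right (mem_principal_self _),
    (tendsto_comap.mono_left inf_le_left).eventually_gt_atTop 0] with z hz hz0
  have hre := cos_mul_norm_le_re (by linarith [Real.pi_pos]) hz
  rw [Real.norm_of_nonneg (Real.rpow_nonneg ((mul_pos hcos hz0).le.trans hre) _),
    Real.norm_of_nonneg (Real.rpow_nonneg (norm_nonneg z) _), ← Real.mul_rpow hcos.le hz0.le]
  exact Real.rpow_le_rpow_of_nonpos (by positivity) hre hc

lemma isBigO_norm_rpow_re_cpow {l : Filter ℂ} {s : ℂ} (hs : s.re ≠ 0) :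
    (fun z : ℂ => ‖z‖ ^ s.re) =O[l] fun z => z ^ s :=
  (isTheta_cpow_const_rpow (f := id) fun h => absurd h hs).symm.isBigO

lemma integrableOn_Ioc_of_intervalIntegrable_of_eq_comp_sub {φ ψ : ℝ → ℂ} {T : ℝ}
    (hφ : IntervalIntegrable φ volume 0 T) (hψ : ∀ t ∈ Icc 0 T, φ t = ψ (T - t)) :
    IntegrableOn ψ (Ioc 0 T) := by
  refine IntegrableOn.congr_fun (f := fun u => φ (T - u)) ?_ (fun u hu => ?_) measurableSet_Ioc
  · simpa using (hφ.comp_sub_left T).symm.1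
  · simp only [hψ (T - u) ⟨by linarith [hu.2], by linarith [hu.1]⟩, sub_sub_cancel]

lemma intervalIntegral_mul_cexp_eq_cexp_mul_integral {φ ψ : ℝ → ℂ} {T : ℝ} (hT : 0 ≤ T)
    (hψ : ∀ t ∈ Icc 0 T, φ t = ψ (T - t)) (z : ℂ) :
    ∫ t in (0 : ℝ)..T, φ t * cexp (z * t) =
      cexp (T * z) * ∫ u in Ioc 0 T, ψ u * cexp (-(z * u)) := by
  have := intervalIntegral.integral_comp_sub_left
    (fun u : ℝ => φ (T - u) * cexp (z * ↑(T - u))) (a := 0) (b := T) T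
  simp only [sub_sub_cancel, sub_self, sub_zero] at this
  rw [this, intervalIntegral.integral_of_le hT, ← MeasureTheory.integral_const_mul]
  refine setIntegral_congr_fun measurableSet_Ioc fun u hu => ?_
  rw [hψ (T - u) ⟨by linarith [hu.2], by linarith [hu.1]⟩, sub_sub_cancel, ofReal_sub,
    show z * (T - u) = T * z + -(z * u) by ring, Complex.exp_add]
  ring

theorem isBigO_integral_cpow_mul_cexp_neg_mul_sub_Gamma {σ : ℂ} {h : ℝ → ℂ} {T δ M : ℝ}
    (hσ : -1 < σ.re) (hT : 0 < T) (hδ : 0 < δ) (hM : 0 ≤ M)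
    (hint : IntegrableOn (fun u : ℝ => (u : ℂ) ^ σ * h u) (Ioc 0 T))
    (hh : ∀ u ∈ Icc 0 δ, ‖h u - h 0‖ ≤ M * u) :
    (fun z : ℂ => (∫ u in Ioc 0 T, (u : ℂ) ^ σ * h u * cexp (-(z * u))) -
        h 0 * Gamma (σ + 1) * z ^ (-σ - 1))
      =O[comap re atTop] fun z => z.re ^ (-(σ.re + 2)) := by
  set g : ℝ → ℂ := fun u => (u : ℂ) ^ σ * h u - (u : ℂ) ^ σ * h 0
  have hcpow : IntegrableOn (fun u : ℝ => (u : ℂ) ^ σ) (Ioc 0 T) :=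
    (intervalIntegral.intervalIntegrable_cpow' hσ).1
  have hg : IntegrableOn g (Ioc 0 T) := hint.sub (hcpow.mul_const _)
  have hgδ : ∀ u ∈ Ioc 0 (min δ T), ‖g u‖ ≤ M * u ^ (σ.re + 1) := fun u hu => calc
    ‖g u‖ = u ^ σ.re * ‖h u - h 0‖ := by
      simp only [g]
      rw [← mul_sub, norm_mul, norm_cpow_eq_rpow_re_of_pos hu.1]
    _ ≤ u ^ σ.re * (M * u) := mul_le_mul_of_nonneg_left
      (hh u ⟨hu.1.le, hu.2.trans (min_le_left _ _)⟩) (Real.rpow_nonneg hu.1.le _)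
    _ = M * u ^ (σ.re + 1) := by
      rw [Real.rpow_add_one hu.1.ne']
      ring
  have hnear := isBigO_integral_mul_cexp_neg_mul (by linarith) hM (lt_min hδ hT)
    (min_le_right _ _) hg hgδ
  rw [add_assoc, one_add_one_eq_two] at hnear
  refine IsBigO.congr' (hnear.sub
    ((isBigO_integral_Ioi_cpow_mul_cexp_neg_mul hσ hT _).const_mul_left (h 0))) ?_ .rfl
  filter_upwards [tendsto_comap.eventually_gt_atTop 0] with z hz
  have hcpowz := integrableOn_mul_cexp_neg_mul hcpow measurableSet_Ioc
    (Ioc_subset_Ioi_self.trans Ioi_subset_Ici_self) hz.le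
  have hgz := integrableOn_mul_cexp_neg_mul hg measurableSet_Ioc
    (Ioc_subset_Ioi_self.trans Ioi_subset_Ici_self) hz.le
  have hGamma : Gamma (σ + 1) * z ^ (-σ - 1) =
      (∫ u in Ioc 0 T, (u : ℂ) ^ σ * cexp (-(z * u))) +
        ∫ u in Ioi T, (u : ℂ) ^ σ * cexp (-(z * u)) := by
    rw [← setIntegral_union (Ioc_disjoint_Ioi le_rfl) measurableSet_Ioi hcpowz
      ((integrableOn_cpow_mul_cexp_neg_mul_Ioi hσ hz).mono_set (Ioi_subset_Ioi hT.le)),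
      Ioc_union_Ioi_eq_Ioi hT.le, integral_cpow_mul_cexp_neg_mul_Ioi hσ hz, neg_sub_left,
      add_comm 1]
  have hsplit : ∫ u in Ioc 0 T, (u : ℂ) ^ σ * h u * cexp (-(z * u)) =
      (∫ u in Ioc 0 T, g u * cexp (-(z * u))) +
        h 0 * ∫ u in Ioc 0 T, (u : ℂ) ^ σ * cexp (-(z * u)) := by
    rw [← MeasureTheory.integral_const_mul, ← integral_add hgz (hcpowz.const_mul _)]
    refine setIntegral_congr_fun measurableSet_Ioc fun u _ => ?_
    simp only [g]
    ring
  rw [hsplit, mul_assoc, hGamma]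
  ring

theorem watson_corollary_left_endpoint_general
    (T : ℝ) (hT : 0 < T)
    (σ : ℂ) (hσ : -1 < σ.re)
    (φ h : ℝ → ℂ)
    (hint : IntervalIntegrable φ volume 0 T)
    (hφ : ∀ t ∈ Set.Icc 0 T, φ t = ((T - t : ℝ) : ℂ) ^ σ * h (T - t))
    (hh : ∃ δ > (0 : ℝ), (∀ t ∈ Set.Icc (0 : ℝ) δ, DifferentiableAt ℝ h t) ∧
          ∃ M : ℝ, ∀ t ∈ Set.Icc (0 : ℝ) δ, ‖deriv h t‖ ≤ M)
    (θ : ℝ) (hθ₀ : 0 ≤ θ) (hθ : θ < Real.pi / 2) :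
    (fun lam : ℂ =>
        (∫ t in (0 : ℝ)..T, φ t * Complex.exp (lam * t)) -
          h 0 * Complex.Gamma (σ + 1) * lam ^ (-σ - 1) * Complex.exp (T * lam))
      =O[comap (‖·‖) atTop ⊓ 𝓟 {lam : ℂ | |Complex.arg lam| ≤ θ}]
      (fun lam : ℂ => lam ^ (-σ - 2) * Complex.exp (T * lam)) := by
  obtain ⟨δ, hδ, hdiff, M, hM⟩ := hh
  have hM0 : 0 ≤ M := (norm_nonneg _).trans (hM 0 ⟨le_rfl, hδ.le⟩)
  have hlip : ∀ u ∈ Icc 0 δ, ‖h u - h 0‖ ≤ M * u := fun u hu => by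
    simpa [abs_of_nonneg hu.1] using (convex_Icc 0 δ).norm_image_sub_le_of_norm_deriv_le
      hdiff hM (left_mem_Icc.2 hδ.le) hu
  have hW := (isBigO_integral_cpow_mul_cexp_neg_mul_sub_Gamma hσ hT hδ hM0
    (integrableOn_Ioc_of_intervalIntegrable_of_eq_comp_sub (ψ := fun u => (u : ℂ) ^ σ * h u)
      hint hφ) hlip).mono
    (tendsto_re_comap_norm_atTop_inf_sector hθ₀ hθ).le_comap
  have hre : -(σ.re + 2) = (-σ - 2).re := by simp; ring
  rw [hre] at hW
  refine ((isBigO_refl (fun z : ℂ => cexp (T * z)) _).mul ((hW.trans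
    (isBigO_re_rpow_norm_rpow_sector hθ₀ hθ (by simp; linarith))).trans
    (isBigO_norm_rpow_re_cpow (by simp; linarith)))).congr (fun z => ?_) fun z => mul_comm _ _
  rw [intervalIntegral_mul_cexp_eq_cexp_mul_integral (ψ := fun u => (u : ℂ) ^ σ * h u)
    hT.le hφ]
  ring

/-- Corollary of Watson's lemma: asymptotics of `∫_0^T φ(t) e^{λt} dt` as `λ → ∞`
in the sector `|arg λ| ≤ θ`, when `φ(t) = (T-t)^σ h(T-t)`. -/
theorem watson_corollary_left_endpoint
    (T : ℝ) (hT : 0 < T)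
    (σ : ℂ) (hσ : -1 < σ.re)
    (φ h : ℝ → ℂ)
    (hint : IntervalIntegrable φ volume 0 T)
    (hφ : ∀ t ∈ Set.Icc 0 T, φ t = ((T - t : ℝ) : ℂ) ^ σ * h (T - t))
    (hh0 : h 0 ≠ 0)
    (hh : ∃ δ > (0 : ℝ), (∀ t ∈ Set.Icc (0 : ℝ) δ, DifferentiableAt ℝ h t) ∧
          ∃ M : ℝ, ∀ t ∈ Set.Icc (0 : ℝ) δ, ‖deriv h t‖ ≤ M)
    (θ : ℝ) (hθ₀ : 0 ≤ θ) (hθ : θ < Real.pi / 2) :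
    (fun lam : ℂ =>
        (∫ t in (0 : ℝ)..T, φ t * Complex.exp (lam * t)) -
          h 0 * Complex.Gamma (σ + 1) * lam ^ (-σ - 1) * Complex.exp (T * lam))
      =O[comap (‖·‖) atTop ⊓ 𝓟 {lam : ℂ | |Complex.arg lam| ≤ θ}]
      (fun lam : ℂ => lam ^ (-σ - 2) * Complex.exp (T * lam)) :=
  watson_corollary_left_endpoint_general T hT σ hσ φ h hint hφ hh θ hθ₀ hθ
end

section
/- Let a, b > 0 and φ as in the Section 2 assumptions. Then the n-th moment satisfies ∫_{-a}^{b} φ(t) t^n dt = (-1)^n f₁(0) Γ(μ+1) n^{-μ-1} a^{n+μ+1} + f₂(0) Γ(ν+1) n^{-ν-1} b^{n+ν+1} + O(n^{-μ-2} a^n) + O(n^{-ν-2} b^n) as n → ∞. -/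
/-!
Near `t = b` substitute `t = b - s` and then `s = b u`: the piece `[b - d, b]` becomes
`b^(n+ν+1) ∫₀^(d/b) u^ν g(u) (1 - u)^n du`, which is compared with
`∫₀^∞ u^ν e^(-n u) du = Γ(ν+1) n^(-ν-1)`. Replacing `g(u)` by `g(0)` costs `O(n^(-ν-2))` because
`g` is Lipschitz at `0`; replacing `(1 - u)^n` by `e^(-n u)` costs `O(n^(-ν-2))` because
`0 ≤ e^(-n u) - (1 - u)^n ≤ n u² e^(-n u) / (1 - d/b)`; the tail `∫_(d/b)^∞` is exponentially
small. The end `-a` is treated the same way after `t = s - a`, which produces the sign `(-1)^n`.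
On the middle piece `[d₁ - a, b - d₂]` we have `|t| ≤ max (a - d₁) (b - d₂) < max a b`, so its
contribution is geometrically smaller than either error term.
-/

open MeasureTheory intervalIntegral Complex Filter Asymptotics Set

lemma integrableOn_rpow_mul_exp_neg_mul {p r : ℝ} (hp : -1 < p) (hr : 0 < r) :
    IntegrableOn (fun u : ℝ => u ^ p * Real.exp (-(r * u))) (Ioi 0) := by
  simpa only [Real.rpow_one, neg_mul] using integrableOn_rpow_mul_exp_neg_mul_rpow hp one_pos hr

lemma integral_rpow_mul_exp_neg_mul_le {p r δ : ℝ} (hp : -1 < p) (hr : 0 < r) (hδ : 0 ≤ δ) :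
    ∫ u in 0..δ, u ^ p * Real.exp (-(r * u)) ≤ Real.Gamma (p + 1) * r ^ (-(p + 1)) := by
  have hΓ := Real.integral_rpow_mul_exp_neg_mul_Ioi (a := p + 1) (by linarith) hr
  rw [add_sub_cancel_right, one_div, Real.inv_rpow hr.le, ← Real.rpow_neg hr.le] at hΓ
  rw [integral_of_le hδ, mul_comm, ← hΓ]
  refine setIntegral_mono_set (integrableOn_rpow_mul_exp_neg_mul hp hr) ?_
    Ioc_subset_Ioi_self.eventuallyLE
  filter_upwards [ae_restrict_mem measurableSet_Ioi] with u (hu : 0 < u)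
  positivity

lemma isBigO_integral_of_norm_le_rpow_mul_exp {E : Type*} [NormedAddCommGroup E]
    [NormedSpace ℝ E] {F : ℕ → ℝ → E} {δ p k K : ℝ} (hδ : 0 ≤ δ) (hp : -1 < p)
    (hF : ∀ n : ℕ, ∀ u ∈ Ioc 0 δ, ‖F n u‖ ≤ K * (n : ℝ) ^ k * (u ^ p * Real.exp (-(n * u)))) :
    (fun n : ℕ => ∫ u in 0..δ, F n u) =O[atTop] fun n : ℕ => (n : ℝ) ^ (k - p - 1) := by
  refine isBigO_iff.2 ⟨|K| * Real.Gamma (p + 1), ?_⟩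
  filter_upwards [eventually_gt_atTop 0] with n hn
  have hn : (0 : ℝ) < n := Nat.cast_pos.2 hn
  set I := ∫ u in 0..δ, u ^ p * Real.exp (-(n * u))
  have hint : IntervalIntegrable (fun u : ℝ => u ^ p * Real.exp (-(n * u))) volume 0 δ :=
    (intervalIntegrable_iff_integrableOn_Ioc_of_le hδ).2
      ((integrableOn_rpow_mul_exp_neg_mul hp hn).mono_set Ioc_subset_Ioi_self)
  have hI : 0 ≤ I := integral_nonneg hδ fun u hu => by have := hu.1; positivity
  calc ‖∫ u in 0..δ, F n u‖
      ≤ ∫ u in 0..δ, K * (n : ℝ) ^ k * (u ^ p * Real.exp (-(n * u))) :=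
        norm_integral_le_of_norm_le hδ (ae_of_all _ (hF n)) (hint.const_mul _)
    _ = K * (n : ℝ) ^ k * I := integral_const_mul _ _
    _ ≤ |K| * (n : ℝ) ^ k * (Real.Gamma (p + 1) * (n : ℝ) ^ (-(p + 1))) := by
        gcongr
        · exact le_abs_self K
        · exact integral_rpow_mul_exp_neg_mul_le hp hn hδ
    _ = |K| * Real.Gamma (p + 1) * ‖(n : ℝ) ^ (k - p - 1)‖ := by
        rw [Real.norm_of_nonneg (by positivity), sub_sub, sub_eq_add_neg, Real.rpow_add hn]
        ring

lemma integral_Ioi_cpow_mul_exp_neg_mul {ν : ℂ} (hν : -1 < ν.re) {r : ℝ} (hr : 0 < r) :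
    ∫ u in Ioi (0 : ℝ), (u : ℂ) ^ ν * ((Real.exp (-(r * u)) : ℝ) : ℂ) =
      Complex.Gamma (ν + 1) * (r : ℂ) ^ (-ν - 1) := by
  have h := Complex.integral_cpow_mul_exp_neg_mul_Ioi (a := ν + 1) (by simp; linarith) hr
  rw [add_sub_cancel_right] at h
  have harg : (r : ℂ).arg ≠ Real.pi := by
    rw [Complex.arg_ofReal_of_nonneg hr.le]; exact Real.pi_ne_zero.symm
  rw [one_div, Complex.inv_cpow _ _ harg, ← Complex.cpow_neg, neg_add', mul_comm] at h
  simpa only [Complex.ofReal_exp, Complex.ofReal_neg, Complex.ofReal_mul] using h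

lemma norm_cpow_mul_exp_neg_mul {ν : ℂ} {u : ℝ} (hu : 0 < u) (r : ℝ) :
    ‖(u : ℂ) ^ ν * ((Real.exp (-(r * u)) : ℝ) : ℂ)‖ = u ^ ν.re * Real.exp (-(r * u)) := by
  rw [norm_mul, Complex.norm_cpow_eq_rpow_re_of_pos hu, Complex.norm_real,
    Real.norm_of_nonneg (Real.exp_pos _).le]

lemma integrableOn_cpow_mul_exp_neg_mul {ν : ℂ} (hν : -1 < ν.re) {r : ℝ} (hr : 0 < r) :
    IntegrableOn (fun u : ℝ => (u : ℂ) ^ ν * ((Real.exp (-(r * u)) : ℝ) : ℂ)) (Ioi 0) := by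
  refine (integrableOn_rpow_mul_exp_neg_mul hν hr).mono' (by fun_prop) ?_
  filter_upwards [ae_restrict_mem measurableSet_Ioi] with u (hu : 0 < u)
  exact (norm_cpow_mul_exp_neg_mul hu r).le

lemma isBigO_integral_Ioi_cpow_mul_exp_neg_mul {ν : ℂ} (hν : -1 < ν.re) {δ : ℝ} (hδ : 0 < δ)
    (w : ℝ) :
    (fun n : ℕ => ∫ u in Ioi δ, (u : ℂ) ^ ν * ((Real.exp (-(n * u)) : ℝ) : ℂ)) =O[atTop]
      fun n : ℕ => (n : ℝ) ^ w := by
  have hexp : (fun n : ℕ => Real.exp (-δ * n)) =o[atTop] fun n : ℕ => (n : ℝ) ^ w :=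
    (isLittleO_exp_neg_mul_rpow_atTop hδ w).comp_tendsto tendsto_natCast_atTop_atTop
  refine IsBigO.trans ?_ hexp.isBigO
  have hint := integrableOn_rpow_mul_exp_neg_mul hν one_pos
  set I := ∫ u in Ioi 0, u ^ ν.re * Real.exp (-(1 * u))
  refine IsBigO.of_bound (Real.exp δ * I) ?_
  filter_upwards [eventually_ge_atTop 1] with n hn
  have hn : (1 : ℝ) ≤ n := Nat.one_le_cast.2 hn
  rw [Real.norm_of_nonneg (Real.exp_pos _).le]
  calc ‖∫ u in Ioi δ, (u : ℂ) ^ ν * ((Real.exp (-(n * u)) : ℝ) : ℂ)‖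
      ≤ ∫ u in Ioi δ, Real.exp δ * Real.exp (-δ * n) * (u ^ ν.re * Real.exp (-(1 * u))) := by
        refine norm_integral_le_of_norm_le
          ((hint.mono_set (Ioi_subset_Ioi hδ.le)).const_mul _) ?_
        filter_upwards [ae_restrict_mem measurableSet_Ioi] with u (hu : δ < u)
        rw [norm_cpow_mul_exp_neg_mul (hδ.trans hu)]
        -- the exponents differ by `(n - 1) (u - δ) ≥ 0`
        have : Real.exp (-(n * u)) ≤ Real.exp δ * Real.exp (-δ * n) * Real.exp (-(1 * u)) := by
          rw [← Real.exp_add, ← Real.exp_add]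
          gcongr
          nlinarith
        have := Real.rpow_nonneg (hδ.trans hu).le ν.re
        nlinarith
    _ = Real.exp δ * Real.exp (-δ * n) * ∫ u in Ioi δ, u ^ ν.re * Real.exp (-(1 * u)) :=
        integral_const_mul _ _
    _ ≤ Real.exp δ * Real.exp (-δ * n) * I := by
        gcongr
        refine setIntegral_mono_set hint ?_ (Ioi_subset_Ioi hδ.le).eventuallyLE
        filter_upwards [ae_restrict_mem measurableSet_Ioi] with u (hu : 0 < u)
        positivity
    _ = Real.exp δ * I * Real.exp (-δ * n) := by ring

lemma one_sub_pow_le_exp_neg_mul {u : ℝ} (hu : u ≤ 1) (n : ℕ) :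
    (1 - u) ^ n ≤ Real.exp (-(n * u)) := by
  rw [neg_mul_eq_mul_neg, Real.exp_nat_mul]
  exact pow_le_pow_left₀ (by linarith) (Real.one_sub_le_exp_neg u) n

lemma exp_neg_mul_sub_one_sub_pow_le {u δ : ℝ} (huδ : u ≤ δ) (hδ : δ < 1) (n : ℕ) :
    Real.exp (-(n * u)) - (1 - u) ^ n ≤ n * u ^ 2 / (1 - δ) * Real.exp (-(n * u)) := by
  have h1u : 0 < 1 - u := by linarith
  -- `log (1 - u) ≥ 1 - (1 - u)⁻¹ = -u - u² / (1 - u)`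
  have hlog : -u - u ^ 2 / (1 - δ) ≤ Real.log (1 - u) := by
    refine le_trans ?_ (Real.one_sub_inv_le_log_of_pos h1u)
    have : u ^ 2 / (1 - u) ≤ u ^ 2 / (1 - δ) := by gcongr
    have : 1 - (1 - u)⁻¹ = -u - u ^ 2 / (1 - u) := by field_simp; ring
    linarith
  have hpow : Real.exp (-(n * u)) * Real.exp (-(n * (u ^ 2 / (1 - δ)))) ≤ (1 - u) ^ n := by
    rw [← Real.exp_add, ← Real.exp_log h1u, ← Real.exp_nat_mul]
    gcongr
    nlinarith [(Nat.cast_nonneg n : (0 : ℝ) ≤ n)]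
  have := mul_le_mul_of_nonneg_left (Real.add_one_le_exp (-(n * (u ^ 2 / (1 - δ)))))
    (Real.exp_pos (-(n * u))).le
  rw [mul_div_assoc]
  linarith

lemma norm_ofReal_cpow_mul {ν h : ℂ} {u : ℝ} (hu : 0 < u) : ‖(u : ℂ) ^ ν * h‖ = u ^ ν.re * ‖h‖ := by
  rw [norm_mul, Complex.norm_cpow_eq_rpow_re_of_pos hu]

lemma isBigO_integral_cpow_mul_sub_mul_one_sub_pow {ν : ℂ} (hν : -1 < ν.re) {g : ℝ → ℂ}
    {δ M : ℝ} (hδ : 0 ≤ δ) (hδ1 : δ ≤ 1) (hgM : ∀ u ∈ Icc 0 δ, ‖g u - g 0‖ ≤ M * u) :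
    (fun n : ℕ => ∫ u in 0..δ, (u : ℂ) ^ ν * ((g u - g 0) * ((1 - u : ℝ) : ℂ) ^ n))
      =O[atTop] fun n : ℕ => (n : ℝ) ^ (-ν.re - 2) := by
  suffices hF : ∀ (n : ℕ), ∀ u ∈ Ioc 0 δ,
      ‖(u : ℂ) ^ ν * ((g u - g 0) * ((1 - u : ℝ) : ℂ) ^ n)‖ ≤
        M * (n : ℝ) ^ (0 : ℝ) * (u ^ (ν.re + 1) * Real.exp (-(n * u))) by
    refine (isBigO_integral_of_norm_le_rpow_mul_exp hδ (by linarith) hF).congr_right fun n => ?_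
    congr 1; ring
  intro n u hu
  have hu1 : u ≤ 1 := hu.2.trans hδ1
  have hgu := hgM u (Ioc_subset_Icc_self hu)
  rw [norm_ofReal_cpow_mul hu.1, norm_mul, norm_pow, Complex.norm_real,
    Real.norm_of_nonneg (sub_nonneg.2 hu1), Real.rpow_zero, mul_one, Real.rpow_add_one hu.1.ne']
  calc u ^ ν.re * (‖g u - g 0‖ * (1 - u) ^ n)
      ≤ u ^ ν.re * (M * u * Real.exp (-(n * u))) :=
        mul_le_mul_of_nonneg_left (mul_le_mul hgu (one_sub_pow_le_exp_neg_mul hu1 n)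
          (pow_nonneg (sub_nonneg.2 hu1) n) ((norm_nonneg _).trans hgu))
          (Real.rpow_nonneg hu.1.le _)
    _ = M * (u ^ ν.re * u * Real.exp (-(n * u))) := by ring

lemma isBigO_integral_cpow_mul_one_sub_pow_sub_exp {ν : ℂ} (hν : -1 < ν.re) {δ : ℝ}
    (hδ : 0 ≤ δ) (hδ1 : δ < 1) :
    (fun n : ℕ => ∫ u in 0..δ,
        (u : ℂ) ^ ν * (((1 - u : ℝ) : ℂ) ^ n - ((Real.exp (-(n * u)) : ℝ) : ℂ)))
      =O[atTop] fun n : ℕ => (n : ℝ) ^ (-ν.re - 2) := by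
  suffices hF : ∀ (n : ℕ), ∀ u ∈ Ioc 0 δ,
      ‖(u : ℂ) ^ ν * (((1 - u : ℝ) : ℂ) ^ n - ((Real.exp (-(n * u)) : ℝ) : ℂ))‖ ≤
        (1 - δ)⁻¹ * (n : ℝ) ^ (1 : ℝ) * (u ^ (ν.re + 2) * Real.exp (-(n * u))) by
    refine (isBigO_integral_of_norm_le_rpow_mul_exp hδ (by linarith) hF).congr_right fun n => ?_
    congr 1; ring
  intro n u hu
  have hu1 : u ≤ 1 := by linarith [hu.2]
  have hcast : ((1 - u : ℝ) : ℂ) ^ n - ((Real.exp (-(n * u)) : ℝ) : ℂ) =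
      (((1 - u) ^ n - Real.exp (-(n * u)) : ℝ) : ℂ) := by
    push_cast; ring
  rw [norm_ofReal_cpow_mul hu.1, hcast, Complex.norm_real, Real.norm_eq_abs, abs_sub_comm,
    abs_of_nonneg (sub_nonneg.2 (one_sub_pow_le_exp_neg_mul hu1 n)), Real.rpow_one,
    Real.rpow_add hu.1, Real.rpow_two]
  calc u ^ ν.re * (Real.exp (-(n * u)) - (1 - u) ^ n)
      ≤ u ^ ν.re * (n * u ^ 2 / (1 - δ) * Real.exp (-(n * u))) :=
        mul_le_mul_of_nonneg_left (exp_neg_mul_sub_one_sub_pow_le hu.2 hδ1 n)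
          (Real.rpow_nonneg hu.1.le _)
    _ = _ := by ring

lemma integral_cpow_mul_one_sub_pow_sub_Gamma_eq {ν : ℂ} (hν : -1 < ν.re) {g : ℝ → ℂ}
    {δ : ℝ} (hδ : 0 ≤ δ) (hg : ContinuousOn g (Icc 0 δ)) {n : ℕ} (hn : 0 < n) :
    (∫ u in 0..δ, (u : ℂ) ^ ν * g u * ((1 - u : ℝ) : ℂ) ^ n) -
        g 0 * Complex.Gamma (ν + 1) * (n : ℂ) ^ (-ν - 1) =
      (∫ u in 0..δ, (u : ℂ) ^ ν * ((g u - g 0) * ((1 - u : ℝ) : ℂ) ^ n)) +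
        g 0 * (∫ u in 0..δ,
          (u : ℂ) ^ ν * (((1 - u : ℝ) : ℂ) ^ n - ((Real.exp (-(n * u)) : ℝ) : ℂ))) -
        g 0 * ∫ u in Ioi δ, (u : ℂ) ^ ν * ((Real.exp (-(n * u)) : ℝ) : ℂ) := by
  have hcpow (h : ℝ → ℂ) (hh : ContinuousOn h (uIcc 0 δ)) :
      IntervalIntegrable (fun u => (u : ℂ) ^ ν * h u) volume 0 δ :=
    (intervalIntegrable_cpow' hν).mul_continuousOn hh
  have hpow : ContinuousOn (fun u : ℝ => ((1 - u : ℝ) : ℂ) ^ n) (uIcc 0 δ) := by fun_prop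
  have he : ContinuousOn (fun u : ℝ => ((Real.exp (-(n * u)) : ℝ) : ℂ)) (uIcc 0 δ) := by
    fun_prop
  have hg' : ContinuousOn g (uIcc 0 δ) := by rwa [uIcc_of_le hδ]
  have hΓ : Complex.Gamma (ν + 1) * (n : ℂ) ^ (-ν - 1) =
      (∫ u in 0..δ, (u : ℂ) ^ ν * ((Real.exp (-(n * u)) : ℝ) : ℂ)) +
        ∫ u in Ioi δ, (u : ℂ) ^ ν * ((Real.exp (-(n * u)) : ℝ) : ℂ) := by
    have hint := integrableOn_cpow_mul_exp_neg_mul hν (Nat.cast_pos.2 hn)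
    rw [integral_interval_add_Ioi hint (hint.mono_set (Ioi_subset_Ioi hδ)),
      integral_Ioi_cpow_mul_exp_neg_mul hν (Nat.cast_pos.2 hn), Complex.ofReal_natCast]
  have hA : (∫ u in 0..δ, (u : ℂ) ^ ν * ((g u - g 0) * ((1 - u : ℝ) : ℂ) ^ n)) =
      (∫ u in 0..δ, (u : ℂ) ^ ν * g u * ((1 - u : ℝ) : ℂ) ^ n) -
        g 0 * ∫ u in 0..δ, (u : ℂ) ^ ν * ((1 - u : ℝ) : ℂ) ^ n := by
    rw [← intervalIntegral.integral_const_mul, ← intervalIntegral.integral_sub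
      ((hcpow (fun u => g u * ((1 - u : ℝ) : ℂ) ^ n) (hg'.mul hpow)).congr
        fun u _ => (mul_assoc _ _ _).symm) ((hcpow _ hpow).const_mul _)]
    congr 1; ext u; ring
  have hB : (∫ u in 0..δ,
        (u : ℂ) ^ ν * (((1 - u : ℝ) : ℂ) ^ n - ((Real.exp (-(n * u)) : ℝ) : ℂ))) =
      (∫ u in 0..δ, (u : ℂ) ^ ν * ((1 - u : ℝ) : ℂ) ^ n) -
        ∫ u in 0..δ, (u : ℂ) ^ ν * ((Real.exp (-(n * u)) : ℝ) : ℂ) := by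
    simp_rw [mul_sub]
    exact intervalIntegral.integral_sub (hcpow _ hpow) (hcpow _ he)
  rw [mul_assoc (g 0), hΓ, hA, hB]
  ring

theorem isBigO_integral_cpow_mul_one_sub_pow_sub_Gamma {ν : ℂ} (hν : -1 < ν.re) {g : ℝ → ℂ}
    {δ M : ℝ} (hδ : 0 < δ) (hδ1 : δ < 1) (hg : ContinuousOn g (Icc 0 δ))
    (hgM : ∀ u ∈ Icc 0 δ, ‖g u - g 0‖ ≤ M * u) :
    (fun n : ℕ => (∫ u in 0..δ, (u : ℂ) ^ ν * g u * ((1 - u : ℝ) : ℂ) ^ n) -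
        g 0 * Complex.Gamma (ν + 1) * (n : ℂ) ^ (-ν - 1)) =O[atTop]
      fun n : ℕ => (n : ℝ) ^ (-ν.re - 2) := by
  have hA := isBigO_integral_cpow_mul_sub_mul_one_sub_pow hν hδ.le hδ1.le hgM
  have hB := (isBigO_integral_cpow_mul_one_sub_pow_sub_exp hν hδ.le hδ1).const_mul_left (g 0)
  have hC := (isBigO_integral_Ioi_cpow_mul_exp_neg_mul hν hδ (-ν.re - 2)).const_mul_left (g 0)
  refine ((hA.add hB).sub hC).congr' ?_ EventuallyEq.rfl
  filter_upwards [eventually_gt_atTop 0] with n hn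
  exact (integral_cpow_mul_one_sub_pow_sub_Gamma_eq hν hδ.le hg hn).symm

lemma integral_cpow_mul_sub_pow_eq {ν : ℂ} {g : ℝ → ℂ} {c δ : ℝ} (hc : 0 < c) (hδ : 0 ≤ δ)
    (n : ℕ) :
    ∫ s in 0..δ, (s : ℂ) ^ ν * g s * ((c - s : ℝ) : ℂ) ^ n =
      (c : ℂ) ^ ((n : ℂ) + ν + 1) *
        ∫ u in 0..δ / c, (u : ℂ) ^ ν * g (c * u) * ((1 - u : ℝ) : ℂ) ^ n := by
  have hcu : EqOn (fun u : ℝ => ((c * u : ℝ) : ℂ) ^ ν * g (c * u) * ((c - c * u : ℝ) : ℂ) ^ n)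
      (fun u => (c : ℂ) ^ ν * (c : ℂ) ^ n *
        ((u : ℂ) ^ ν * g (c * u) * ((1 - u : ℝ) : ℂ) ^ n)) (uIcc 0 (δ / c)) := by
    intro u hu
    rw [uIcc_of_le (div_nonneg hδ hc.le)] at hu
    dsimp only
    rw [Complex.ofReal_mul, Complex.mul_cpow_ofReal_nonneg hc.le hu.1 ν,
      show c - c * u = c * (1 - u) by ring, Complex.ofReal_mul, mul_pow]
    ring
  have hc' : (c : ℂ) ≠ 0 := Complex.ofReal_ne_zero.2 hc.ne'
  have h := intervalIntegral.integral_comp_mul_left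
    (fun s : ℝ => (s : ℂ) ^ ν * g s * ((c - s : ℝ) : ℂ) ^ n) (a := 0) (b := δ / c) hc.ne'
  rw [mul_zero, mul_div_cancel₀ δ hc.ne', integral_congr hcu,
    intervalIntegral.integral_const_mul, eq_inv_smul_iff₀ hc.ne'] at h
  rw [← h, Complex.real_smul, Complex.cpow_add _ _ hc', Complex.cpow_add _ _ hc',
    Complex.cpow_natCast, Complex.cpow_one]
  ring

theorem isBigO_integral_cpow_mul_sub_pow_sub_Gamma {ν : ℂ} (hν : -1 < ν.re) {g : ℝ → ℂ}
    {c δ M : ℝ} (hc : 0 < c) (hδ : 0 < δ) (hδc : δ < c) (hg : ContinuousOn g (Icc 0 δ))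
    (hgM : ∀ s ∈ Icc 0 δ, ‖g s - g 0‖ ≤ M * s) :
    (fun n : ℕ => (∫ s in 0..δ, (s : ℂ) ^ ν * g s * ((c - s : ℝ) : ℂ) ^ n) -
        g 0 * Complex.Gamma (ν + 1) * (n : ℂ) ^ (-ν - 1) * (c : ℂ) ^ ((n : ℂ) + ν + 1))
      =O[atTop] fun n : ℕ => ‖(n : ℂ) ^ (-ν - 2)‖ * c ^ n := by
  have hmaps : MapsTo (fun u => c * u) (Icc 0 (δ / c)) (Icc 0 δ) := fun u hu =>
    ⟨mul_nonneg hc.le hu.1, by rw [← le_div_iff₀' hc]; exact hu.2⟩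
  have hunit := isBigO_integral_cpow_mul_one_sub_pow_sub_Gamma hν (g := fun u => g (c * u))
    (M := M * c) (div_pos hδ hc) ((div_lt_one hc).2 hδc) (hg.comp (by fun_prop) hmaps)
    fun u hu => by rw [mul_zero]; exact (hgM _ (hmaps hu)).trans_eq (by ring)
  simp only [mul_zero] at hunit
  have hcpow : (fun n : ℕ => (c : ℂ) ^ ((n : ℂ) + ν + 1)) =O[atTop] fun n : ℕ => c ^ n := by
    refine IsBigO.of_bound (c ^ (ν.re + 1)) (Eventually.of_forall fun n => le_of_eq ?_)
    rw [Complex.norm_cpow_eq_rpow_re_of_pos hc, Real.norm_of_nonneg (by positivity)]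
    simp only [Complex.add_re, Complex.natCast_re, Complex.one_re]
    rw [add_assoc, Real.rpow_add hc, Real.rpow_natCast, mul_comm]
  refine (hcpow.mul hunit).congr (fun n => ?_) fun n => ?_
  · rw [integral_cpow_mul_sub_pow_eq hc hδ.le]
    ring
  · rw [mul_comm, norm_natCast_cpow_of_re_ne_zero n (by simp; linarith)]
    simp

lemma isBigO_pow_of_lt {r m : ℝ} (hr : 0 < r) (hrm : r < m) (s : ℂ) :
    (fun n : ℕ => r ^ n) =O[atTop] fun n : ℕ => ‖(n : ℂ) ^ s‖ * m ^ n := by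
  have hlog : 0 < Real.log m - Real.log r := sub_pos.2 (Real.log_lt_log hr hrm)
  have h := (isLittleO_exp_neg_mul_rpow_atTop hlog s.re).comp_tendsto tendsto_natCast_atTop_atTop
  refine (h.isBigO.mul (isBigO_refl (fun n : ℕ => m ^ n) atTop)).congr' ?_ ?_
  · refine Eventually.of_forall fun n => ?_
    simp only [Function.comp_apply]
    rw [neg_sub, sub_mul, Real.exp_sub, mul_comm (Real.log r), mul_comm (Real.log m),
      Real.exp_nat_mul, Real.exp_nat_mul, Real.exp_log hr, Real.exp_log (hr.trans hrm),
      div_mul_cancel₀ _ (pow_ne_zero n (hr.trans hrm).ne')]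
  · filter_upwards [eventually_gt_atTop 0] with n hn
    rw [Function.comp_apply, norm_natCast_cpow_of_pos hn]

lemma Asymptotics.IsBigO.add_right_of_nonneg {α E : Type*} [Norm E] {l : Filter α} {u : α → E}
    {f g : α → ℝ} (h : u =O[l] f) (hf : ∀ x, 0 ≤ f x) (hg : ∀ x, 0 ≤ g x) :
    u =O[l] fun x => f x + g x :=
  h.trans_le fun x => by
    rw [Real.norm_of_nonneg (hf x), Real.norm_of_nonneg (add_nonneg (hf x) (hg x))]
    linarith [hg x]

lemma Asymptotics.IsBigO.add_left_of_nonneg {α E : Type*} [Norm E] {l : Filter α} {u : α → E}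
    {f g : α → ℝ} (h : u =O[l] g) (hf : ∀ x, 0 ≤ f x) (hg : ∀ x, 0 ≤ g x) :
    u =O[l] fun x => f x + g x :=
  (h.add_right_of_nonneg hg hf).congr_right fun _ => add_comm _ _

lemma Asymptotics.IsBigO.neg_one_pow_mul {𝕜 F : Type*} [NormedDivisionRing 𝕜] [Norm F]
    {l : Filter ℕ} {f : ℕ → 𝕜} {g : ℕ → F} (h : f =O[l] g) :
    (fun n => (-1 : 𝕜) ^ n * f n) =O[l] g :=
  (isBigO_of_le _ fun n => by simp).trans h

lemma isBigO_integral_mul_pow {φ : ℝ → ℂ} {x y r : ℝ} (hxy : x ≤ y)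
    (hr : ∀ t ∈ Icc x y, |t| ≤ r) (hφ : IntervalIntegrable φ volume x y) :
    (fun n : ℕ => ∫ t in x..y, φ t * (t : ℂ) ^ n) =O[atTop] fun n : ℕ => r ^ n := by
  have hr0 : 0 ≤ r := (abs_nonneg x).trans (hr x ⟨le_rfl, hxy⟩)
  refine IsBigO.of_bound (∫ t in x..y, ‖φ t‖) (Eventually.of_forall fun n => ?_)
  rw [Real.norm_of_nonneg (pow_nonneg hr0 n), ← intervalIntegral.integral_mul_const]
  refine norm_integral_le_of_norm_le hxy (ae_of_all _ fun t ht => ?_) (hφ.norm.mul_const _)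
  rw [norm_mul, norm_pow, Complex.norm_real, Real.norm_eq_abs]
  gcongr
  exact hr t (Ioc_subset_Icc_self ht)

lemma isBigO_integral_mul_pow_middle {φ : ℝ → ℂ} {a b d₁ d₂ : ℝ}
    (hint : IntervalIntegrable φ volume (-a) b) (hd₁ : 0 < d₁) (hd₁a : d₁ < a) (hd₂ : 0 < d₂)
    (hd₂b : d₂ < b) (s₁ s₂ : ℂ) :
    (fun n : ℕ => ∫ t in (d₁ - a)..(b - d₂), φ t * (t : ℂ) ^ n) =O[atTop]
      fun n : ℕ => ‖(n : ℂ) ^ s₁‖ * a ^ n + ‖(n : ℂ) ^ s₂‖ * b ^ n := by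
  set r := max (a - d₁) (b - d₂)
  have hr : 0 < r := lt_max_of_lt_left (by linarith)
  have h := isBigO_integral_mul_pow (φ := φ) (x := d₁ - a) (y := b - d₂) (r := r)
    (by linarith) (fun t ht => abs_le.2 ⟨by linarith [le_max_left (a - d₁) (b - d₂), ht.1],
      by linarith [le_max_right (a - d₁) (b - d₂), ht.2]⟩)
    (hint.mono_set (by
      rw [uIcc_of_le (by linarith), uIcc_of_le (by linarith)]
      exact Icc_subset_Icc (by linarith) (by linarith)))
  have h₁ (n : ℕ) : 0 ≤ ‖(n : ℂ) ^ s₁‖ * a ^ n :=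
    mul_nonneg (norm_nonneg _) (pow_nonneg (by linarith) n)
  have h₂ (n : ℕ) : 0 ≤ ‖(n : ℂ) ^ s₂‖ * b ^ n :=
    mul_nonneg (norm_nonneg _) (pow_nonneg (by linarith) n)
  rcases le_total a b with hab | hab
  · exact h.trans ((isBigO_pow_of_lt hr (max_lt (by linarith) (by linarith)) s₂).add_left_of_nonneg
      h₁ h₂)
  · exact h.trans ((isBigO_pow_of_lt hr (max_lt (by linarith) (by linarith)) s₁).add_right_of_nonneg
      h₁ h₂)

lemma integral_mul_pow_near_left_endpoint {φ f : ℝ → ℂ} {μ : ℂ} {a d : ℝ} (hd : 0 ≤ d)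
    (hφ : ∀ t ∈ Icc (-a) (d - a), φ t = ((t + a : ℝ) : ℂ) ^ μ * f (t + a)) (n : ℕ) :
    ∫ t in (-a)..(d - a), φ t * (t : ℂ) ^ n =
      (-1) ^ n * ∫ s in 0..d, (s : ℂ) ^ μ * f s * ((a - s : ℝ) : ℂ) ^ n := by
  rw [← zero_sub, ← intervalIntegral.integral_comp_sub_right, ← intervalIntegral.integral_const_mul]
  refine integral_congr fun s hs => ?_
  rw [uIcc_of_le hd] at hs
  rw [hφ (s - a) ⟨by linarith [hs.1], by linarith [hs.2]⟩, sub_add_cancel,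
    show ((s - a : ℝ) : ℂ) = -1 * ((a - s : ℝ) : ℂ) by push_cast; ring, mul_pow]
  ring

lemma integral_mul_pow_near_right_endpoint {φ f : ℝ → ℂ} {ν : ℂ} {b d : ℝ} (hd : 0 ≤ d)
    (hφ : ∀ t ∈ Icc (b - d) b, φ t = ((b - t : ℝ) : ℂ) ^ ν * f (b - t)) (n : ℕ) :
    ∫ t in (b - d)..b, φ t * (t : ℂ) ^ n =
      ∫ s in 0..d, (s : ℂ) ^ ν * f s * ((b - s : ℝ) : ℂ) ^ n := by
  have h := intervalIntegral.integral_comp_sub_left (fun t => φ t * (t : ℂ) ^ n) b (a := 0) (b := d)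
  rw [sub_zero] at h
  rw [← h]
  refine integral_congr fun s hs => ?_
  rw [uIcc_of_le hd] at hs
  rw [hφ (b - s) ⟨by linarith [hs.2], by linarith [hs.1]⟩, sub_sub_cancel]

lemma integral_mul_pow_eq_endpoints_add_middle {φ f₁ f₂ : ℝ → ℂ} {μ ν : ℂ} {a b d₁ d₂ : ℝ}
    (hint : IntervalIntegrable φ volume (-a) b)
    (hφ₁ : ∀ t ∈ Icc (-a) b, φ t = ((t + a : ℝ) : ℂ) ^ μ * f₁ (t + a))
    (hφ₂ : ∀ t ∈ Icc (-a) b, φ t = ((b - t : ℝ) : ℂ) ^ ν * f₂ (b - t))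
    (hd₁ : 0 ≤ d₁) (hd₂ : 0 ≤ d₂) (hd : d₁ + d₂ ≤ a + b) (n : ℕ) :
    ∫ t in (-a)..b, φ t * (t : ℂ) ^ n =
      (-1) ^ n * (∫ s in 0..d₁, (s : ℂ) ^ μ * f₁ s * ((a - s : ℝ) : ℂ) ^ n) +
        (∫ t in (d₁ - a)..(b - d₂), φ t * (t : ℂ) ^ n) +
        ∫ s in 0..d₂, (s : ℂ) ^ ν * f₂ s * ((b - s : ℝ) : ℂ) ^ n := by
  have hab : -a ≤ b := by linarith
  have hII : ∀ x ∈ Icc (-a) b, ∀ y ∈ Icc (-a) b,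
      IntervalIntegrable (fun t => φ t * (t : ℂ) ^ n) volume x y := fun x hx y hy =>
    (hint.mul_continuousOn (by fun_prop)).mono_set
      (uIcc_subset_uIcc (by rwa [uIcc_of_le hab]) (by rwa [uIcc_of_le hab]))
  have hm₁ : d₁ - a ∈ Icc (-a) b := ⟨by linarith, by linarith⟩
  have hm₂ : b - d₂ ∈ Icc (-a) b := ⟨by linarith, by linarith⟩
  rw [← integral_add_adjacent_intervals (hII _ (left_mem_Icc.2 hab) _ hm₁)
      (hII _ hm₁ _ (right_mem_Icc.2 hab)),
    ← integral_add_adjacent_intervals (hII _ hm₁ _ hm₂) (hII _ hm₂ _ (right_mem_Icc.2 hab)),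
    integral_mul_pow_near_left_endpoint hd₁
      (fun t ht => hφ₁ t (Icc_subset_Icc_right hm₁.2 ht)) n,
    integral_mul_pow_near_right_endpoint hd₂
      (fun t ht => hφ₂ t (Icc_subset_Icc_left hm₂.1 ht)) n]
  ring

lemma exists_continuousOn_norm_sub_le_of_deriv {E : Type*} [NormedAddCommGroup E]
    [NormedSpace ℝ E] {f : ℝ → E}
    (hf : ∃ δ > (0 : ℝ), (∀ t ∈ Icc 0 δ, DifferentiableAt ℝ f t) ∧
      ∃ M : ℝ, ∀ t ∈ Icc 0 δ, ‖deriv f t‖ ≤ M) {ε : ℝ} (hε : 0 < ε) :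
    ∃ d ∈ Ioo 0 ε, ContinuousOn f (Icc 0 d) ∧ ∃ M : ℝ, ∀ s ∈ Icc 0 d, ‖f s - f 0‖ ≤ M * s := by
  obtain ⟨δ, hδ, hdiff, M, hM⟩ := hf
  have hsub : Icc 0 (min δ (ε / 2)) ⊆ Icc 0 δ := Icc_subset_Icc_right (min_le_left _ _)
  refine ⟨min δ (ε / 2), ⟨lt_min hδ (half_pos hε), (min_le_right _ _).trans_lt (half_lt_self hε)⟩,
    fun t ht => (hdiff t (hsub ht)).continuousAt.continuousWithinAt, M, fun s hs => ?_⟩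
  simpa [abs_of_nonneg hs.1] using (convex_Icc 0 δ).norm_image_sub_le_of_norm_deriv_le hdiff hM
    (left_mem_Icc.2 hδ.le) (hsub hs)

theorem moment_asymptotics_general
    (a b : ℝ) (ha : 0 < a) (hb : 0 < b)
    (μ ν : ℂ) (hμ : -1 < μ.re) (hν : -1 < ν.re)
    (φ f₁ f₂ : ℝ → ℂ)
    (hint : IntervalIntegrable φ volume (-a) b)
    (hφ₁ : ∀ t ∈ Set.Icc (-a) b, φ t = ((t + a : ℝ) : ℂ) ^ μ * f₁ (t + a))
    (hφ₂ : ∀ t ∈ Set.Icc (-a) b, φ t = ((b - t : ℝ) : ℂ) ^ ν * f₂ (b - t))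
    (hf₁ : ∃ δ > (0 : ℝ), (∀ t ∈ Set.Icc (0 : ℝ) δ, DifferentiableAt ℝ f₁ t) ∧
          ∃ M : ℝ, ∀ t ∈ Set.Icc (0 : ℝ) δ, ‖deriv f₁ t‖ ≤ M)
    (hf₂ : ∃ δ > (0 : ℝ), (∀ t ∈ Set.Icc (0 : ℝ) δ, DifferentiableAt ℝ f₂ t) ∧
          ∃ M : ℝ, ∀ t ∈ Set.Icc (0 : ℝ) δ, ‖deriv f₂ t‖ ≤ M) :
    (fun n : ℕ =>
        (∫ t in (-a)..b, φ t * (t : ℂ) ^ n) -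
          ((-1) ^ n * f₁ 0 * Complex.Gamma (μ + 1) * (n : ℂ) ^ (-μ - 1) *
              (a : ℂ) ^ ((n : ℂ) + μ + 1) +
            f₂ 0 * Complex.Gamma (ν + 1) * (n : ℂ) ^ (-ν - 1) *
              (b : ℂ) ^ ((n : ℂ) + ν + 1)))
      =O[atTop]
      (fun n : ℕ => ‖((n : ℂ) ^ (-μ - 2))‖ * a ^ n + ‖((n : ℂ) ^ (-ν - 2))‖ * b ^ n) := by
  obtain ⟨d₁, ⟨hd₁, hd₁a⟩, hg₁, M₁, hM₁⟩ := exists_continuousOn_norm_sub_le_of_deriv hf₁ ha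
  obtain ⟨d₂, ⟨hd₂, hd₂b⟩, hg₂, M₂, hM₂⟩ := exists_continuousOn_norm_sub_le_of_deriv hf₂ hb
  have hleft := isBigO_integral_cpow_mul_sub_pow_sub_Gamma hμ ha hd₁ hd₁a hg₁ hM₁
  have hright := isBigO_integral_cpow_mul_sub_pow_sub_Gamma hν hb hd₂ hd₂b hg₂ hM₂
  have hmid := isBigO_integral_mul_pow_middle hint hd₁ hd₁a hd₂ hd₂b (-μ - 2) (-ν - 2)
  have hT₁ : ∀ n : ℕ, 0 ≤ ‖(n : ℂ) ^ (-μ - 2)‖ * a ^ n := fun n => by positivity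
  have hT₂ : ∀ n : ℕ, 0 ≤ ‖(n : ℂ) ^ (-ν - 2)‖ * b ^ n := fun n => by positivity
  refine (((hleft.add_right_of_nonneg hT₁ hT₂).neg_one_pow_mul.add hmid).add
    (hright.add_left_of_nonneg hT₁ hT₂)).congr_left fun n => ?_
  rw [integral_mul_pow_eq_endpoints_add_middle hint hφ₁ hφ₂ hd₁.le hd₂.le (by linarith) n]
  ring

/-- Moment asymptotics: contribution of both endpoints.  -/
theorem moment_asymptotics
    (a b : ℝ) (ha : 0 < a) (hb : 0 < b)
    (μ ν : ℂ) (hμ : -1 < μ.re) (hν : -1 < ν.re)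
    (φ f₁ f₂ : ℝ → ℂ)
    (hint : IntervalIntegrable φ volume (-a) b)
    (hφ₁ : ∀ t ∈ Set.Icc (-a) b, φ t = ((t + a : ℝ) : ℂ) ^ μ * f₁ (t + a))
    (hφ₂ : ∀ t ∈ Set.Icc (-a) b, φ t = ((b - t : ℝ) : ℂ) ^ ν * f₂ (b - t))
    (hf₁0 : f₁ 0 ≠ 0) (hf₂0 : f₂ 0 ≠ 0)
    (hf₁ : ∃ δ > (0 : ℝ), (∀ t ∈ Set.Icc (0 : ℝ) δ, DifferentiableAt ℝ f₁ t) ∧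
          ∃ M : ℝ, ∀ t ∈ Set.Icc (0 : ℝ) δ, ‖deriv f₁ t‖ ≤ M)
    (hf₂ : ∃ δ > (0 : ℝ), (∀ t ∈ Set.Icc (0 : ℝ) δ, DifferentiableAt ℝ f₂ t) ∧
          ∃ M : ℝ, ∀ t ∈ Set.Icc (0 : ℝ) δ, ‖deriv f₂ t‖ ≤ M) :
    (fun n : ℕ =>
        (∫ t in (-a)..b, φ t * (t : ℂ) ^ n) -
          ((-1) ^ n * f₁ 0 * Complex.Gamma (μ + 1) * (n : ℂ) ^ (-μ - 1) *
              (a : ℂ) ^ ((n : ℂ) + μ + 1) +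
            f₂ 0 * Complex.Gamma (ν + 1) * (n : ℂ) ^ (-ν - 1) *
              (b : ℂ) ^ ((n : ℂ) + ν + 1)))
      =O[atTop]
      (fun n : ℕ => ‖((n : ℂ) ^ (-μ - 2))‖ * a ^ n + ‖((n : ℂ) ^ (-ν - 2))‖ * b ^ n) :=
  moment_asymptotics_general a b ha hb μ ν hμ hν φ f₁ f₂ hint hφ₁ hφ₂ hf₁ hf₂
end

section
/- Let c = max{a, b} with a, b > 0 and φ as in the Section 2 assumptions, with the additional assumption that in case a = b and Re μ = Re ν, n ranges over indices for which (-1)^n f₁(0)Γ(μ+1) + f₂(0)Γ(ν+1) a^{ν-μ} n^{μ-ν} is bounded away from 0. Then |∫_{-a}^{b} φ(t) t^n dt|^{1/n} → c as n → ∞. -/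
/-!
Split the moment at `0` and substitute `t = s - a`, `t = b - s`:
`∫_{-a}^b φ(t) tⁿ dt = (-1)ⁿ ∫₀^a s^μ f₁(s) (a-s)ⁿ ds + ∫₀^b s^ν f₂(s) (b-s)ⁿ ds`.
By Watson's lemma, `∫₀^c s^w f(s) (c-s)ⁿ ds = f(0) Γ(w+1) cⁿ (c/n)^(w+1) (1 + o(1))`: after
`s = c u / n` the integrand converges to `u^w f(0) e^(-u)` under the domination
`(1 - u/n)ⁿ ≤ e^(-u)`, and the part of the integral away from `0` is exponentially smaller.
The two leading terms cannot cancel: one of them is negligible against the other unless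
`a = b` and `Re μ = Re ν`, and in that case the hypothesis on the subsequence keeps their sum
comparable to their size. So the moments lie between `κ cⁿ n^K` and `C cⁿ`, and their
`n`-th roots tend to `c = max a b`.
-/

open MeasureTheory intervalIntegral Complex Filter Asymptotics Topology Set

theorem tendsto_rpow_inv_const_mul_pow_mul_rpow {κ c : ℝ} (hκ : 0 < κ) (hc : 0 < c) (K : ℝ) :
    Tendsto (fun n : ℕ => (κ * c ^ n * (n : ℝ) ^ K) ^ (n : ℝ)⁻¹) atTop (𝓝 c) := by
  have hinv : Tendsto (fun n : ℕ => (n : ℝ)⁻¹) atTop (𝓝 0) := tendsto_inv_atTop_nhds_zero_nat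
  have hlog : Tendsto (fun n : ℕ => Real.log n / n) atTop (𝓝 0) :=
    Real.isLittleO_log_id_atTop.tendsto_div_nhds_zero.comp tendsto_natCast_atTop_atTop
  have hexp : Tendsto (fun n : ℕ => Real.exp (Real.log κ * (n : ℝ)⁻¹ + Real.log c +
      K * (Real.log n / n))) atTop (𝓝 c) := by
    rw [← Real.exp_log hc]
    refine (Real.continuous_exp.tendsto _).comp ?_
    simpa using ((hinv.const_mul (Real.log κ)).add_const (Real.log c)).add (hlog.const_mul K)
  refine hexp.congr' ?_
  filter_upwards [eventually_ge_atTop 1] with n hn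
  have hn : (0 : ℝ) < n := by exact_mod_cast hn
  rw [Real.rpow_def_of_pos (by positivity), Real.log_mul (by positivity) (by positivity),
    Real.log_mul hκ.ne' (by positivity), Real.log_pow, Real.log_rpow hn]
  congr 1
  field_simp

theorem tendsto_rpow_inv_of_le_of_le {l : Filter ℕ} (hl : l ≤ atTop) {x : ℕ → ℝ} {κ c C K : ℝ}
    (hκ : 0 < κ) (hc : 0 < c) (hlow : ∀ᶠ n : ℕ in l, κ * c ^ n * (n : ℝ) ^ K ≤ x n)
    (hup : ∀ᶠ n : ℕ in l, x n ≤ C * c ^ n) :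
    Tendsto (fun n : ℕ => x n ^ (n : ℝ)⁻¹) l (𝓝 c) := by
  have hupper := tendsto_rpow_inv_const_mul_pow_mul_rpow (κ := max C 1)
    (lt_max_of_lt_right one_pos) hc 0
  simp only [Real.rpow_zero, mul_one] at hupper
  refine tendsto_of_tendsto_of_tendsto_of_le_of_le'
    ((tendsto_rpow_inv_const_mul_pow_mul_rpow hκ hc K).mono_left hl) (hupper.mono_left hl) ?_ ?_
  · filter_upwards [hlow] with n hn
    exact Real.rpow_le_rpow (by positivity) hn (by positivity)
  · filter_upwards [hlow, hup] with n hlo hn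
    refine Real.rpow_le_rpow ((by positivity : (0 : ℝ) ≤ κ * c ^ n * (n : ℝ) ^ K).trans hlo)
      (hn.trans ?_) (by positivity)
    gcongr
    exact le_max_left C 1

theorem tendsto_rpow_mul_pow_of_lt_one {r : ℝ} (hr₀ : 0 ≤ r) (hr₁ : r < 1) (G : ℝ) :
    Tendsto (fun n : ℕ => (n : ℝ) ^ G * r ^ n) atTop (𝓝 0) := by
  refine squeeze_zero' (.of_forall fun n => by positivity) ?_
    (tendsto_pow_const_mul_const_pow_of_lt_one ⌈G⌉₊ hr₀ hr₁)
  filter_upwards [eventually_ge_atTop 1] with n hn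
  have hn : (1 : ℝ) ≤ n := by exact_mod_cast hn
  gcongr
  calc (n : ℝ) ^ G ≤ (n : ℝ) ^ (⌈G⌉₊ : ℝ) := Real.rpow_le_rpow_of_exponent_le hn (Nat.le_ceil G)
    _ = (n : ℝ) ^ ⌈G⌉₊ := Real.rpow_natCast _ _

theorem isLittleO_pow_mul_rpow {p q E F : ℝ} (hp : 0 < p) (hq : 0 ≤ q)
    (h : q < p ∨ q = p ∧ E < F) :
    (fun n : ℕ => q ^ n * (n : ℝ) ^ E) =o[atTop] fun n => p ^ n * (n : ℝ) ^ F := by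
  have hratio : Tendsto (fun n : ℕ => (n : ℝ) ^ (E - F) * (q / p) ^ n) atTop (𝓝 0) := by
    rcases h with h | ⟨rfl, h⟩
    · exact tendsto_rpow_mul_pow_of_lt_one (by positivity) ((div_lt_one hp).2 h) _
    · simpa [div_self hp.ne', Function.comp_def] using
        (tendsto_rpow_neg_atTop (sub_pos.2 h)).comp tendsto_natCast_atTop_atTop
  have hpos : ∀ᶠ n : ℕ in atTop, (0 : ℝ) < n :=
    (eventually_gt_atTop 0).mono fun n hn => by exact_mod_cast hn
  refine isLittleO_of_tendsto' (hpos.mono fun n hn h0 => absurd h0 (by positivity))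
    (hratio.congr' (hpos.mono fun n hn => ?_))
  rw [Real.rpow_sub hn, div_pow]
  field_simp

section NormedAsymptotics

variable {α E : Type*} [SeminormedAddCommGroup E] {l : Filter α}

theorem eventually_le_norm_add_of_isLittleO {y z : α → E} {D : α → ℝ} {κ : ℝ} (hκ : 0 < κ)
    (hy : ∀ᶠ n in l, κ * D n ≤ ‖y n‖) (hz : z =o[l] D) :
    ∀ᶠ n in l, κ / 2 * D n ≤ ‖y n + z n‖ := by
  filter_upwards [hy, hz.bound (half_pos hκ)] with n hy hz
  have htri : ‖y n‖ - ‖z n‖ ≤ ‖y n + z n‖ := by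
    simpa using norm_sub_le (y n + z n) (z n)
  rcases le_or_gt 0 (D n) with hD | hD
  · rw [Real.norm_of_nonneg hD] at hz
    linarith
  · nlinarith [norm_nonneg (y n + z n)]

theorem eventually_norm_add_norm_le_of_isLittleO {x y : α → E} (h : y =o[l] x) :
    ∀ᶠ n in l, (‖x n‖ + ‖y n‖) / 3 ≤ ‖x n + y n‖ := by
  filter_upwards [h.bound (by norm_num : (0 : ℝ) < 1 / 2)] with n hy
  have htri : ‖x n‖ - ‖y n‖ ≤ ‖x n + y n‖ := by
    simpa using norm_sub_le (x n + y n) (y n)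
  linarith

theorem isLittleO_sub_const_mul_of_tendsto_div {𝕜 : Type*} [NormedField 𝕜] {u v : α → 𝕜} {L : 𝕜}
    (hv : ∀ᶠ n in l, v n ≠ 0) (h : Tendsto (fun n => u n / v n) l (𝓝 L)) :
    (fun n => u n - L * v n) =o[l] v := by
  refine (isLittleO_iff_tendsto' (hv.mono fun n hn h0 => absurd h0 hn)).2 ?_
  rw [← sub_self L]
  refine (h.sub_const L).congr' (hv.mono fun n hn => ?_)
  simp only [sub_div, mul_div_cancel_right₀ _ hn]

theorem exists_mul_le_norm_add_of_isLittleO {𝕜 : Type*} [NormedField 𝕜] {u v σ : α → 𝕜}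
    (hσ : ∀ n, ‖σ n‖ = 1) {A B : 𝕜} (hA : A ≠ 0) (hB : B ≠ 0) (h : v =o[l] u ∨ u =o[l] v) :
    ∃ κ > 0, ∀ᶠ n in l, κ * (‖u n‖ + ‖v n‖) ≤ ‖σ n * A * u n + B * v n‖ := by
  have hnorm_x : ∀ n, ‖σ n * A * u n‖ = ‖A‖ * ‖u n‖ := fun n => by simp [hσ]
  have hnorm_y : ∀ n, ‖B * v n‖ = ‖B‖ * ‖v n‖ := fun n => norm_mul _ _
  have hsum : ∀ n, min ‖A‖ ‖B‖ * (‖u n‖ + ‖v n‖) ≤ ‖σ n * A * u n‖ + ‖B * v n‖ := fun n => by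
    rw [hnorm_x, hnorm_y, mul_add]
    gcongr
    exacts [min_le_left _ _, min_le_right _ _]
  refine ⟨min ‖A‖ ‖B‖ / 3, by positivity, ?_⟩
  have hlo : (fun n => B * v n) =o[l] (fun n => σ n * A * u n) ∨
      (fun n => σ n * A * u n) =o[l] (fun n => B * v n) := by
    rcases h with h | h
    · refine .inl (isLittleO_norm_norm.1 ?_)
      simpa only [hnorm_x, hnorm_y] using
        (h.norm_norm.const_mul_left ‖B‖).const_mul_right (norm_ne_zero_iff.2 hA)
    · refine .inr (isLittleO_norm_norm.1 ?_)
      simpa only [hnorm_x, hnorm_y] using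
        (h.norm_norm.const_mul_left ‖A‖).const_mul_right (norm_ne_zero_iff.2 hB)
  rcases hlo with h | h
  · filter_upwards [eventually_norm_add_norm_le_of_isLittleO h] with n hn
    linarith [hsum n]
  · filter_upwards [eventually_norm_add_norm_le_of_isLittleO h] with n hn
    rw [add_comm (‖B * v n‖), add_comm (B * v n)] at hn
    linarith [hsum n]

end NormedAsymptotics

theorem norm_integral_mul_ofReal_pow_le {ψ : ℝ → ℂ} {h : ℝ → ℝ} {p q R : ℝ} (hpq : p ≤ q)
    (hψ : IntervalIntegrable ψ volume p q) (hh : ∀ t ∈ Ioc p q, |h t| ≤ R) (n : ℕ) :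
    ‖∫ t in p..q, ψ t * (h t : ℂ) ^ n‖ ≤ (∫ t in p..q, ‖ψ t‖) * R ^ n := by
  rw [← intervalIntegral.integral_mul_const]
  refine norm_integral_le_of_norm_le hpq (ae_of_all _ fun t ht => ?_) (hψ.norm.mul_const _)
  rw [norm_mul, norm_pow, norm_real, Real.norm_eq_abs]
  gcongr
  exact hh t ht

noncomputable def rescaledIntegrand (w : ℂ) (f : ℝ → ℂ) (θ : ℝ) (n : ℕ) : ℝ → ℂ :=
  indicator (Ioc 0 (n * θ)) fun u => (u : ℂ) ^ w * f (u / n) * ((1 - u / n : ℝ) : ℂ) ^ n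

theorem norm_rescaledIntegrand_le {w : ℂ} {f : ℝ → ℂ} {θ M : ℝ} (hθ₀ : 0 ≤ θ) (hθ₁ : θ ≤ 1)
    (hM : ∀ x ∈ Icc 0 θ, ‖f x‖ ≤ M) (n : ℕ) (u : ℝ) :
    ‖rescaledIntegrand w f θ n u‖ ≤ M * ‖(Real.exp (-u) : ℂ) * (u : ℂ) ^ w‖ := by
  have hM₀ : 0 ≤ M := (norm_nonneg _).trans (hM 0 ⟨le_rfl, hθ₀⟩)
  by_cases hu : u ∈ Ioc 0 (n * θ)
  · have hn : (0 : ℝ) < n := pos_of_mul_pos_left (hu.1.trans_le hu.2) hθ₀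
    have hun : u / n ≤ θ := by rw [div_le_iff₀ hn]; linarith [hu.2]
    have hexp : (1 - u / n) ^ n ≤ Real.exp (-u) :=
      Real.one_sub_div_pow_le_exp_neg (by nlinarith [hu.2])
    have hf := hM _ ⟨div_nonneg hu.1.le hn.le, hun⟩
    have h1 : 0 ≤ 1 - u / n := by linarith
    rw [rescaledIntegrand, indicator_of_mem hu, norm_mul, norm_mul, norm_mul, norm_pow, norm_real,
      norm_real, Real.norm_of_nonneg h1, Real.norm_of_nonneg (Real.exp_pos _).le]
    calc _ ≤ ‖(u : ℂ) ^ w‖ * M * Real.exp (-u) := by gcongr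
      _ = _ := by ring
  · rw [rescaledIntegrand, indicator_of_notMem hu, norm_zero]
    positivity

theorem tendsto_rescaledIntegrand {w : ℂ} {f : ℝ → ℂ} (hf : ContinuousAt f 0) {θ : ℝ}
    (hθ : 0 < θ) {u : ℝ} (hu : 0 < u) :
    Tendsto (fun n => rescaledIntegrand w f θ n u) atTop
      (𝓝 ((u : ℂ) ^ w * f 0 * (Real.exp (-u) : ℂ))) := by
  have hF : ∀ᶠ n : ℕ in atTop,
      (u : ℂ) ^ w * f (u / n) * ((1 - u / n : ℝ) : ℂ) ^ n = rescaledIntegrand w f θ n u := by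
    filter_upwards [eventually_ge_atTop ⌈u / θ⌉₊] with n hn
    rw [Nat.ceil_le, div_le_iff₀ hθ] at hn
    rw [rescaledIntegrand, indicator_of_mem (show u ∈ Ioc 0 (n * θ) from ⟨hu, hn⟩)]
  have hf_lim : Tendsto (fun n : ℕ => f (u / n)) atTop (𝓝 (f 0)) :=
    hf.tendsto.comp (tendsto_const_div_atTop_nhds_zero_nat u)
  have hexp_lim : Tendsto (fun n : ℕ => ((1 - u / n : ℝ) : ℂ) ^ n) atTop
      (𝓝 (Real.exp (-u) : ℂ)) := by
    refine ((continuous_ofReal.tendsto _).comp (Real.tendsto_one_add_div_pow_exp (-u))).congr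
      fun n => ?_
    simp [neg_div, sub_eq_add_neg]
  exact ((tendsto_const_nhds.mul hf_lim).mul hexp_lim).congr' hF

theorem setIntegral_rescaledIntegrand (w : ℂ) (f : ℝ → ℂ) {θ : ℝ} (hθ : 0 ≤ θ) (n : ℕ) :
    ∫ u in Ioi 0, rescaledIntegrand w f θ n u =
      ∫ u in (0 : ℝ)..n * θ, (u : ℂ) ^ w * f (u / n) * ((1 - u / n : ℝ) : ℂ) ^ n := by
  rw [rescaledIntegrand, MeasureTheory.integral_indicator measurableSet_Ioc,
    Measure.restrict_restrict_of_subset Ioc_subset_Ioi_self,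
    intervalIntegral.integral_of_le (by positivity)]

theorem tendsto_integral_rescaled {w : ℂ} (hw : -1 < w.re) {f : ℝ → ℂ} (hf : Continuous f)
    {θ : ℝ} (hθ₀ : 0 < θ) (hθ₁ : θ ≤ 1) :
    Tendsto (fun n : ℕ =>
        ∫ u in (0 : ℝ)..n * θ, (u : ℂ) ^ w * f (u / n) * ((1 - u / n : ℝ) : ℂ) ^ n)
      atTop (𝓝 (f 0 * Gamma (w + 1))) := by
  obtain ⟨M, hM⟩ := isCompact_Icc.exists_bound_of_continuousOn (hf.continuousOn (s := Icc 0 θ))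
  have hw' : 0 < (w + 1).re := by simp; linarith
  have hmeas : ∀ n, AEStronglyMeasurable (rescaledIntegrand w f θ n) (volume.restrict (Ioi 0)) :=
    fun n => (by fun_prop : Measurable _).aestronglyMeasurable.indicator measurableSet_Ioc
  have hdom : Integrable (fun u : ℝ => M * ‖(Real.exp (-u) : ℂ) * (u : ℂ) ^ w‖)
      (volume.restrict (Ioi 0)) := by
    simpa using (GammaIntegral_convergent hw').norm.const_mul M
  have hΓ : ∫ u : ℝ in Ioi 0, (u : ℂ) ^ w * f 0 * (Real.exp (-u) : ℂ) = f 0 * Gamma (w + 1) := by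
    rw [Gamma_eq_integral hw', GammaIntegral, ← MeasureTheory.integral_const_mul]
    refine setIntegral_congr_fun measurableSet_Ioi fun u _ => ?_
    simp only [add_sub_cancel_right, ofReal_exp, ofReal_neg]
    ring
  simpa only [setIntegral_rescaledIntegrand w f hθ₀.le, hΓ] using
    tendsto_integral_of_dominated_convergence _ hmeas hdom
      (fun n => ae_of_all _ (norm_rescaledIntegrand_le hθ₀.le hθ₁ hM n))
      ((ae_restrict_iff' measurableSet_Ioi).2 (ae_of_all _ fun u hu =>
        tendsto_rescaledIntegrand hf.continuousAt hθ₀ hu))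

noncomputable def watsonScale (c : ℝ) (w : ℂ) (n : ℕ) : ℂ :=
  (c : ℂ) ^ n * ((c / n : ℝ) : ℂ) ^ (w + 1)

theorem norm_watsonScale {c : ℝ} (hc : 0 ≤ c) {w : ℂ} (hw : w.re ≠ -1) (n : ℕ) :
    ‖watsonScale c w n‖ = c ^ (w.re + 1) * (c ^ n * (n : ℝ) ^ (-(w.re + 1))) := by
  rw [watsonScale, norm_mul, norm_pow, norm_real, Real.norm_of_nonneg hc,
    norm_cpow_eq_rpow_re_of_nonneg (by positivity) (by simp; contrapose! hw; linarith),
    add_re, one_re, Real.div_rpow hc (Nat.cast_nonneg n), Real.rpow_neg (Nat.cast_nonneg n)]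
  ring

theorem integral_eq_watsonScale_mul {c η : ℝ} (hc : 0 < c) (hη : 0 ≤ η) (w : ℂ) (f : ℝ → ℂ)
    {n : ℕ} (hn : n ≠ 0) :
    ∫ s in (0 : ℝ)..η, (s : ℂ) ^ w * f s * ((c - s : ℝ) : ℂ) ^ n =
      watsonScale c w n *
        ∫ u in (0 : ℝ)..n * (η / c), (u : ℂ) ^ w * f (c * (u / n)) * ((1 - u / n : ℝ) : ℂ) ^ n := by
  have hn : (0 : ℝ) < n := by positivity
  have hk : 0 < c / n := by positivity
  have hsub := smul_integral_comp_mul_left (a := 0) (b := n * (η / c))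
    (fun s => (s : ℂ) ^ w * f s * ((c - s : ℝ) : ℂ) ^ n) (c / n)
  rw [mul_zero, show c / n * (n * (η / c)) = η by field_simp] at hsub
  rw [← hsub, real_smul, watsonScale, ← intervalIntegral.integral_const_mul,
    ← intervalIntegral.integral_const_mul]
  refine integral_congr fun u hu => ?_
  rw [uIcc_of_le (by positivity)] at hu
  rw [ofReal_mul, mul_cpow_ofReal_nonneg hk.le hu.1, cpow_add _ _ (by exact_mod_cast hk.ne'),
    cpow_one, show c / n * u = c * (u / n) by ring,
    show c - c * (u / n) = c * (1 - u / n) by ring, ofReal_mul, mul_pow]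
  ring

theorem watsonScale_ne_zero {c : ℝ} (hc : 0 < c) (w : ℂ) {n : ℕ} (hn : n ≠ 0) :
    watsonScale c w n ≠ 0 :=
  mul_ne_zero (pow_ne_zero _ (by exact_mod_cast hc.ne'))
    (by simp [cpow_eq_zero_iff, hc.ne', hn])

theorem tendsto_integral_div_watsonScale {c η : ℝ} (hη : 0 < η) (hηc : η ≤ c) {w : ℂ}
    (hw : -1 < w.re) {f : ℝ → ℂ} (hf : ContinuousOn f (Icc 0 η)) :
    Tendsto (fun n => (∫ s in (0 : ℝ)..η, (s : ℂ) ^ w * f s * ((c - s : ℝ) : ℂ) ^ n) /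
      watsonScale c w n) atTop (𝓝 (f 0 * Gamma (w + 1))) := by
  have hc : 0 < c := hη.trans_le hηc
  set g := IccExtend hη.le ((Icc 0 η).domRestrict f)
  have hg : EqOn g f (Icc 0 η) := fun x hx => IccExtend_of_mem hη.le _ hx
  have hg_cont : Continuous g := continuous_IccExtend_iff.2 hf.domRestrict
  have hlim := tendsto_integral_rescaled hw (hg_cont.comp (continuous_const_mul c))
    (div_pos hη hc) ((div_le_one hc).2 hηc)
  simp only [Function.comp_apply, mul_zero, hg ⟨le_rfl, hη.le⟩] at hlim
  refine hlim.congr' ?_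
  filter_upwards [eventually_ne_atTop 0] with n hn
  rw [eq_div_iff (watsonScale_ne_zero hc w hn), mul_comm,
    ← integral_eq_watsonScale_mul hc hη.le _ _ hn]
  refine integral_congr fun s hs => ?_
  rw [uIcc_of_le hη.le] at hs
  simp only [hg hs]

theorem isLittleO_pow_watsonScale {c q : ℝ} (hq : 0 ≤ q) (hqc : q < c) {w : ℂ}
    (hw : -1 < w.re) : (fun n : ℕ => q ^ n) =o[atTop] watsonScale c w := by
  have hc : 0 < c := hq.trans_lt hqc
  rw [← isLittleO_norm_right]
  simp_rw [norm_watsonScale hc.le hw.ne']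
  simpa using (isLittleO_pow_mul_rpow (E := 0) (F := -(w.re + 1)) (hq.trans_lt hqc) hq
    (.inl hqc)).const_mul_right (c := c ^ (w.re + 1)) (by positivity)

theorem isLittleO_watsonScale {p q : ℝ} (hq : 0 < q) {w w' : ℂ} (hw : -1 < w.re)
    (hw' : -1 < w'.re) (h : q < p ∨ q = p ∧ w.re < w'.re) :
    watsonScale q w' =o[atTop] watsonScale p w := by
  have hp : 0 < p := by rcases h with h | ⟨rfl, -⟩ <;> linarith
  rw [← isLittleO_norm_left, ← isLittleO_norm_right]
  simp_rw [norm_watsonScale hq.le hw'.ne', norm_watsonScale hp.le hw.ne']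
  exact ((isLittleO_pow_mul_rpow hp hq.le (h.imp_right fun h => ⟨h.1, by linarith [h.2]⟩))
    |>.const_mul_left _).const_mul_right (by positivity)

theorem isLittleO_integral_sub_watsonScale {c δ : ℝ} (hc : 0 < c) (hδ : 0 < δ) {w : ℂ}
    (hw : -1 < w.re) {f : ℝ → ℂ} (hf : ContinuousOn f (Icc 0 δ))
    (hint : IntervalIntegrable (fun s => (s : ℂ) ^ w * f s) volume 0 c) :
    (fun n : ℕ => (∫ s in (0 : ℝ)..c, (s : ℂ) ^ w * f s * ((c - s : ℝ) : ℂ) ^ n) -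
      f 0 * Gamma (w + 1) * watsonScale c w n) =o[atTop] watsonScale c w := by
  obtain ⟨η, hη, hηδ, hηc⟩ : ∃ η, 0 < η ∧ η ≤ δ ∧ η < c :=
    ⟨min δ c / 2, by positivity, by linarith [min_le_left δ c], by linarith [min_le_right δ c]⟩
  have hint' : ∀ n : ℕ, IntervalIntegrable
      (fun s => (s : ℂ) ^ w * f s * ((c - s : ℝ) : ℂ) ^ n) volume 0 c := fun n =>
    hint.mul_continuousOn (by fun_prop)
  have hmem : η ∈ uIcc 0 c := mem_uIcc_of_le hη.le hηc.le
  have hhead : (fun n : ℕ => (∫ s in (0 : ℝ)..η, (s : ℂ) ^ w * f s * ((c - s : ℝ) : ℂ) ^ n) -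
      f 0 * Gamma (w + 1) * watsonScale c w n) =o[atTop] watsonScale c w := by
    refine isLittleO_sub_const_mul_of_tendsto_div
      ((eventually_ne_atTop 0).mono fun n hn => watsonScale_ne_zero hc w hn)
      (tendsto_integral_div_watsonScale hη hηc.le hw (hf.mono (Icc_subset_Icc_right hηδ)))
  have htail : (fun n : ℕ => ∫ s in η..c, (s : ℂ) ^ w * f s * ((c - s : ℝ) : ℂ) ^ n)
      =o[atTop] watsonScale c w := by
    refine IsBigO.trans_isLittleO (IsBigO.of_norm_le fun n => norm_integral_mul_ofReal_pow_le
      hηc.le (hint.mono_set ?_) (fun t ht => ?_) n)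
      ((isLittleO_pow_watsonScale (sub_nonneg.2 hηc.le) (sub_lt_self c hη) hw).const_mul_left _)
    · exact uIcc_subset_uIcc hmem right_mem_uIcc
    · rw [abs_of_nonneg (sub_nonneg.2 ht.2)]
      linarith [ht.1]
  refine (hhead.add htail).congr' (.of_forall fun n => ?_) .rfl
  beta_reduce
  rw [← integral_add_adjacent_intervals
    ((hint' n).mono_set (uIcc_subset_uIcc left_mem_uIcc hmem))
    ((hint' n).mono_set (uIcc_subset_uIcc hmem right_mem_uIcc))]
  ring

theorem watsonScale_eq_mul {a : ℝ} (ha : 0 < a) (μ ν : ℂ) {n : ℕ} (hn : n ≠ 0) :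
    watsonScale a ν n = watsonScale a μ n * ((a : ℂ) ^ (ν - μ) * (n : ℂ) ^ (μ - ν)) := by
  have hn' : (0 : ℝ) < n := by positivity
  have hbase : ((a / n : ℝ) : ℂ) ≠ 0 := by exact_mod_cast (div_pos ha hn').ne'
  have hsplit : ((a / n : ℝ) : ℂ) ^ (ν - μ) = (a : ℂ) ^ (ν - μ) * (n : ℂ) ^ (μ - ν) := by
    rw [div_eq_mul_inv, ofReal_mul, mul_cpow_ofReal_nonneg ha.le (by positivity), ofReal_inv,
      inv_cpow _ _ (by simp [Real.pi_ne_zero.symm]), ← cpow_neg,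
      neg_sub, ofReal_natCast]
  rw [watsonScale, watsonScale, ← hsplit, mul_assoc, ← cpow_add _ _ hbase]
  ring_nf

theorem integral_mul_pow_eq_of_eqOn {ψ f : ℝ → ℂ} {c : ℝ} {w : ℂ}
    (hψ : ∀ t ∈ Icc 0 c, ψ t = ((c - t : ℝ) : ℂ) ^ w * f (c - t)) (hc : 0 ≤ c) (n : ℕ) :
    ∫ t in (0 : ℝ)..c, ψ t * (t : ℂ) ^ n =
      ∫ s in (0 : ℝ)..c, (s : ℂ) ^ w * f s * ((c - s : ℝ) : ℂ) ^ n := by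
  have hsub := integral_comp_sub_left (fun t => ψ t * (t : ℂ) ^ n) c (a := 0) (b := c)
  rw [sub_self, sub_zero] at hsub
  rw [← hsub]
  refine integral_congr fun s hs => ?_
  rw [uIcc_of_le hc] at hs
  simp only [hψ (c - s) ⟨by linarith [hs.2], by linarith [hs.1]⟩, sub_sub_cancel]

theorem IntervalIntegrable.cpow_mul_of_eqOn {ψ f : ℝ → ℂ} {c : ℝ} {w : ℂ}
    (hψ : ∀ t ∈ Icc 0 c, ψ t = ((c - t : ℝ) : ℂ) ^ w * f (c - t)) (hc : 0 ≤ c)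
    (hint : IntervalIntegrable ψ volume 0 c) :
    IntervalIntegrable (fun s => (s : ℂ) ^ w * f s) volume 0 c := by
  have hrefl := (hint.comp_sub_left c).symm
  rw [sub_self, sub_zero] at hrefl
  refine hrefl.congr fun s hs => ?_
  rw [uIoc_of_le hc] at hs
  simp only [hψ (c - s) ⟨by linarith [hs.2], by linarith [hs.1]⟩, sub_sub_cancel]

theorem moment_eq_endpoint_integrals {φ f₁ f₂ : ℝ → ℂ} {a b : ℝ} {μ ν : ℂ} (ha : 0 ≤ a)
    (hb : 0 ≤ b) (hint : IntervalIntegrable φ volume (-a) b)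
    (hφ₁ : ∀ t ∈ Icc (-a) b, φ t = ((t + a : ℝ) : ℂ) ^ μ * f₁ (t + a))
    (hφ₂ : ∀ t ∈ Icc (-a) b, φ t = ((b - t : ℝ) : ℂ) ^ ν * f₂ (b - t)) (n : ℕ) :
    ∫ t in (-a)..b, φ t * (t : ℂ) ^ n =
      (-1) ^ n * (∫ s in (0 : ℝ)..a, (s : ℂ) ^ μ * f₁ s * ((a - s : ℝ) : ℂ) ^ n) +
        ∫ s in (0 : ℝ)..b, (s : ℂ) ^ ν * f₂ s * ((b - s : ℝ) : ℂ) ^ n := by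
  have hmem : (0 : ℝ) ∈ uIcc (-a) b := mem_uIcc_of_le (by linarith) hb
  have hint' := hint.mul_continuousOn (g := fun t : ℝ => (t : ℂ) ^ n) (by fun_prop)
  have hneg := integral_comp_neg (fun t => φ t * (t : ℂ) ^ n) (a := 0) (b := a)
  rw [neg_zero] at hneg
  rw [← integral_add_adjacent_intervals (hint'.mono_set (uIcc_subset_uIcc left_mem_uIcc hmem))
    (hint'.mono_set (uIcc_subset_uIcc hmem right_mem_uIcc)),
    integral_mul_pow_eq_of_eqOn (fun t ht => hφ₂ t ⟨by linarith [ht.1], ht.2⟩) hb,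
    ← integral_mul_pow_eq_of_eqOn (ψ := fun t => φ (-t)) (fun t ht => ?_) ha,
    ← intervalIntegral.integral_const_mul, ← hneg]
  · congr 1
    refine integral_congr fun t _ => ?_
    simp only [ofReal_neg, neg_pow (t : ℂ), ← mul_assoc, mul_comm _ ((-1 : ℂ) ^ n)]
  · rw [hφ₁ (-t) ⟨by linarith [ht.2], by linarith [ht.1]⟩, neg_add_eq_sub]

theorem exists_mul_le_norm_add_watsonScale {a b : ℝ} (ha : 0 < a) (hb : 0 < b) {μ ν : ℂ}
    (hμ : -1 < μ.re) (hν : -1 < ν.re) {A B : ℂ} (hA : A ≠ 0) (hB : B ≠ 0) {l : Filter ℕ}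
    (hl : l ≤ atTop)
    (hdeg : a = b ∧ μ.re = ν.re →
      ∃ ε > 0, ∀ᶠ n : ℕ in l, ε ≤ ‖(-1) ^ n * A + B * (a : ℂ) ^ (ν - μ) * (n : ℂ) ^ (μ - ν)‖) :
    ∃ κ > 0, ∀ᶠ n in l, κ * (‖watsonScale a μ n‖ + ‖watsonScale b ν n‖) ≤
      ‖(-1) ^ n * A * watsonScale a μ n + B * watsonScale b ν n‖ := by
  by_cases hd : a = b ∧ μ.re = ν.re
  · obtain ⟨rfl, hre⟩ := hd
    obtain ⟨ε, hε, hev⟩ := hdeg ⟨rfl, hre⟩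
    refine ⟨ε / 2, by positivity, ?_⟩
    filter_upwards [hev, hl (eventually_ne_atTop 0)] with n hn hn0
    have hnorm : ‖watsonScale a ν n‖ = ‖watsonScale a μ n‖ := by
      rw [norm_watsonScale ha.le hν.ne', norm_watsonScale ha.le hμ.ne', hre]
    rw [hnorm, watsonScale_eq_mul ha μ ν hn0, show ∀ g X : ℂ, (-1) ^ n * A * g + B * (g * X) =
      g * ((-1) ^ n * A + B * X) from fun _ _ => by ring, norm_mul, ← mul_assoc B]
    nlinarith [norm_nonneg (watsonScale a μ n)]
  refine exists_mul_le_norm_add_of_isLittleO (fun n => by simp) hA hB ?_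
  rcases lt_trichotomy a b with hab | rfl | hab
  · exact .inr ((isLittleO_watsonScale ha hν hμ (.inl hab)).mono hl)
  · rcases lt_or_gt_of_ne fun h => hd ⟨rfl, h⟩ with hre | hre
    · exact .inl ((isLittleO_watsonScale ha hμ hν (.inr ⟨rfl, hre⟩)).mono hl)
    · exact .inr ((isLittleO_watsonScale ha hν hμ (.inr ⟨rfl, hre⟩)).mono hl)
  · exact .inl ((isLittleO_watsonScale hb hμ hν (.inl hab)).mono hl)

theorem exists_pow_mul_rpow_le_norm_add_norm_watsonScale {a b : ℝ} (ha : 0 < a) (hb : 0 < b)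
    {μ ν : ℂ} (hμ : -1 < μ.re) (hν : -1 < ν.re) :
    ∃ K κ : ℝ, 0 < κ ∧ ∀ n : ℕ,
      κ * max a b ^ n * (n : ℝ) ^ K ≤ ‖watsonScale a μ n‖ + ‖watsonScale b ν n‖ := by
  rcases le_total a b with hab | hab
  · refine ⟨-(ν.re + 1), b ^ (ν.re + 1), by positivity, fun n => ?_⟩
    rw [max_eq_right hab, norm_watsonScale hb.le hν.ne', mul_assoc]
    exact le_add_of_nonneg_left (norm_nonneg _)
  · refine ⟨-(μ.re + 1), a ^ (μ.re + 1), by positivity, fun n => ?_⟩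
    rw [max_eq_left hab, norm_watsonScale ha.le hμ.ne', mul_assoc]
    exact le_add_of_nonneg_right (norm_nonneg _)

theorem exists_pow_mul_rpow_le_norm_alternating_add {a b : ℝ} (ha : 0 < a) (hb : 0 < b) {μ ν : ℂ}
    (hμ : -1 < μ.re) (hν : -1 < ν.re) {A B : ℂ} (hA : A ≠ 0) (hB : B ≠ 0) {l : Filter ℕ}
    (hl : l ≤ atTop)
    (hdeg : a = b ∧ μ.re = ν.re →
      ∃ ε > 0, ∀ᶠ n : ℕ in l, ε ≤ ‖(-1) ^ n * A + B * (a : ℂ) ^ (ν - μ) * (n : ℂ) ^ (μ - ν)‖)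
    {Wa Wb : ℕ → ℂ} (hWa : (fun n => Wa n - A * watsonScale a μ n) =o[atTop] watsonScale a μ)
    (hWb : (fun n => Wb n - B * watsonScale b ν n) =o[atTop] watsonScale b ν) :
    ∃ K κ : ℝ, 0 < κ ∧
      ∀ᶠ n : ℕ in l, κ * max a b ^ n * (n : ℝ) ^ K ≤ ‖(-1) ^ n * Wa n + Wb n‖ := by
  obtain ⟨κ, hκ, hlead⟩ := exists_mul_le_norm_add_watsonScale ha hb hμ hν hA hB hl hdeg
  set D : ℕ → ℝ := fun n => ‖watsonScale a μ n‖ + ‖watsonScale b ν n‖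
  have hDa : watsonScale a μ =O[atTop] D := IsBigO.of_norm_le fun n =>
    le_add_of_nonneg_right (norm_nonneg _)
  have hDb : watsonScale b ν =O[atTop] D := IsBigO.of_norm_le fun n =>
    le_add_of_nonneg_left (norm_nonneg _)
  have hrest : (fun n => (-1) ^ n * (Wa n - A * watsonScale a μ n) +
      (Wb n - B * watsonScale b ν n)) =o[l] D := by
    refine (isLittleO_norm_left.1 ?_).add ((hWb.trans_isBigO hDb).mono hl)
    simpa using isLittleO_norm_left.2 ((hWa.trans_isBigO hDa).mono hl)
  obtain ⟨K, κ', hκ', hscale⟩ := exists_pow_mul_rpow_le_norm_add_norm_watsonScale ha hb hμ hν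
  refine ⟨K, κ / 2 * κ', by positivity, ?_⟩
  filter_upwards [eventually_le_norm_add_of_isLittleO hκ hlead hrest] with n hn
  have hsplit : (-1) ^ n * Wa n + Wb n = (-1) ^ n * A * watsonScale a μ n +
      B * watsonScale b ν n + ((-1) ^ n * (Wa n - A * watsonScale a μ n) +
        (Wb n - B * watsonScale b ν n)) := by ring
  calc κ / 2 * κ' * max a b ^ n * (n : ℝ) ^ K = κ / 2 * (κ' * max a b ^ n * (n : ℝ) ^ K) := by
        ring
    _ ≤ κ / 2 * D n := by gcongr; exact hscale n
    _ ≤ _ := hsplit ▸ hn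

theorem intervalIntegrable_cpow_mul_left {φ f₁ : ℝ → ℂ} {a b : ℝ} {μ : ℂ} (ha : 0 ≤ a)
    (hb : 0 ≤ b) (hint : IntervalIntegrable φ volume (-a) b)
    (hφ₁ : ∀ t ∈ Icc (-a) b, φ t = ((t + a : ℝ) : ℂ) ^ μ * f₁ (t + a)) :
    IntervalIntegrable (fun s => (s : ℂ) ^ μ * f₁ s) volume 0 a := by
  refine IntervalIntegrable.cpow_mul_of_eqOn (ψ := fun t => φ (-t)) (fun t ht => ?_) ha ?_
  · rw [hφ₁ (-t) ⟨by linarith [ht.2], by linarith [ht.1]⟩, neg_add_eq_sub]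
  · simpa using ((IntervalIntegrable.iff_comp_neg (by simp)).1
      (hint.mono_set (uIcc_subset_uIcc left_mem_uIcc (mem_uIcc_of_le (by linarith) hb)))).symm

theorem intervalIntegrable_cpow_mul_right {φ f₂ : ℝ → ℂ} {a b : ℝ} {ν : ℂ} (ha : 0 ≤ a)
    (hb : 0 ≤ b) (hint : IntervalIntegrable φ volume (-a) b)
    (hφ₂ : ∀ t ∈ Icc (-a) b, φ t = ((b - t : ℝ) : ℂ) ^ ν * f₂ (b - t)) :
    IntervalIntegrable (fun s => (s : ℂ) ^ ν * f₂ s) volume 0 b :=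
  IntervalIntegrable.cpow_mul_of_eqOn (fun t ht => hφ₂ t ⟨by linarith [ht.1], ht.2⟩) hb
    (hint.mono_set (uIcc_subset_uIcc (mem_uIcc_of_le (by linarith) hb) right_mem_uIcc))

theorem norm_integral_mul_pow_le_max {φ : ℝ → ℂ} {a b : ℝ} (hab : -a ≤ b)
    (hint : IntervalIntegrable φ volume (-a) b) (n : ℕ) :
    ‖∫ t in (-a)..b, φ t * (t : ℂ) ^ n‖ ≤ (∫ t in (-a)..b, ‖φ t‖) * max a b ^ n :=
  norm_integral_mul_ofReal_pow_le (h := fun t => t) hab hint (fun t ht => abs_le.2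
    ⟨by linarith [ht.1, le_max_left a b], by linarith [ht.2, le_max_right a b]⟩) n

/-- `|∫_{-a}^b φ(t) t^n dt|^{1/n} → max{a,b}` along a subsequence of indices on which,
in the degenerate case `a = b` and `Re μ = Re ν`, the leading coefficient is bounded
away from `0`. -/
theorem moment_root_limit
    (a b : ℝ) (ha : 0 < a) (hb : 0 < b) (c : ℝ) (hc : c = max a b)
    (μ ν : ℂ) (hμ : -1 < μ.re) (hν : -1 < ν.re)
    (φ f₁ f₂ : ℝ → ℂ)
    (hint : IntervalIntegrable φ volume (-a) b)
    (hφ₁ : ∀ t ∈ Set.Icc (-a) b, φ t = ((t + a : ℝ) : ℂ) ^ μ * f₁ (t + a))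
    (hφ₂ : ∀ t ∈ Set.Icc (-a) b, φ t = ((b - t : ℝ) : ℂ) ^ ν * f₂ (b - t))
    (hf₁0 : f₁ 0 ≠ 0) (hf₂0 : f₂ 0 ≠ 0)
    (hf₁ : ∃ δ > (0 : ℝ), (∀ t ∈ Set.Icc (0 : ℝ) δ, DifferentiableAt ℝ f₁ t) ∧
          ∃ M : ℝ, ∀ t ∈ Set.Icc (0 : ℝ) δ, ‖deriv f₁ t‖ ≤ M)
    (hf₂ : ∃ δ > (0 : ℝ), (∀ t ∈ Set.Icc (0 : ℝ) δ, DifferentiableAt ℝ f₂ t) ∧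
          ∃ M : ℝ, ∀ t ∈ Set.Icc (0 : ℝ) δ, ‖deriv f₂ t‖ ≤ M)
    (N : ℕ → ℕ) (hN : StrictMono N)
    (hnondeg : (a = b ∧ μ.re = ν.re) →
      ∃ ε > (0 : ℝ), ∀ k : ℕ,
        ε ≤ ‖(-1 : ℂ) ^ (N k) * f₁ 0 * Complex.Gamma (μ + 1) +
              f₂ 0 * Complex.Gamma (ν + 1) * (a : ℂ) ^ (ν - μ) * (N k : ℂ) ^ (μ - ν)‖) :
    Tendsto (fun k : ℕ =>
        ‖∫ t in (-a)..b, φ t * (t : ℂ) ^ (N k)‖ ^ ((N k : ℝ)⁻¹))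
      atTop (nhds c) := by
  obtain ⟨δ₁, hδ₁, hdiff₁, -⟩ := hf₁
  obtain ⟨δ₂, hδ₂, hdiff₂, -⟩ := hf₂
  have hl : map N atTop ≤ atTop := hN.tendsto_atTop
  have hΓ : ∀ w : ℂ, -1 < w.re → Gamma (w + 1) ≠ 0 := fun w hw =>
    Gamma_ne_zero_of_re_pos (by simp; linarith)
  have hleft := isLittleO_integral_sub_watsonScale ha hδ₁ hμ
    (fun t ht => (hdiff₁ t ht).continuousAt.continuousWithinAt)
    (intervalIntegrable_cpow_mul_left ha.le hb.le hint hφ₁)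
  have hright := isLittleO_integral_sub_watsonScale hb hδ₂ hν
    (fun t ht => (hdiff₂ t ht).continuousAt.continuousWithinAt)
    (intervalIntegrable_cpow_mul_right ha.le hb.le hint hφ₂)
  obtain ⟨K, κ, hκ, hlow⟩ := exists_pow_mul_rpow_le_norm_alternating_add ha hb hμ hν
    (mul_ne_zero hf₁0 (hΓ μ hμ)) (mul_ne_zero hf₂0 (hΓ ν hν)) hl (fun hdeg => by
      obtain ⟨ε, hε, h⟩ := hnondeg hdeg
      exact ⟨ε, hε, eventually_map.2 (.of_forall fun k => by simpa only [mul_assoc] using h k)⟩)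
    hleft hright
  subst hc
  refine tendsto_map'_iff.1 (tendsto_rpow_inv_of_le_of_le (K := K) hl hκ (lt_max_of_lt_left ha) ?_
    (.of_forall (norm_integral_mul_pow_le_max (by linarith) hint)))
  simpa only [moment_eq_endpoint_integrals ha.le hb.le hint hφ₁ hφ₂] using hlow
end

section
/- For every angle θ ∈ [0, 2π) there exists a unique r > 0 such that r e^{iθ} lies on the curve D_{a,b} = {z : Re z ≤ 0, |z| ≤ 1/c, |c z e^{1 + a z}| = 1} ∪ {z : Re z ≥ 0, |z| ≤ 1/c, |c z e^{1 - b z}| = 1}, where a, b > 0 and c = max{a, b}. -/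
/-!
On the ray of angle `θ`, the point `z = r e^{iθ}` satisfies
`‖c z e^{1 + a z}‖ = c r e^{1 + a r cos θ}` and `‖c z e^{1 - b z}‖ = c r e^{1 - b r cos θ}`,
and the sign condition on `Re z = r cos θ` selects one of the two. So the ray meets `D_{a,b}`
where `c r e^{1 - α r} = 1` with `α = -a cos θ` or `b cos θ`, and `α ≤ c`. The function
`r ↦ c r e^{1 - α r}` increases strictly on `[0, 1/c]` (its derivative is `c e^{1 - α r} (1 - α r)`),
vanishes at `0` and is at least `1` at `1/c`, so it takes the value `1` exactly once there.
-/

lemma strictMonoOn_mul_exp_one_sub {c α : ℝ} (hc : 0 < c) (hαc : α ≤ c) :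
    StrictMonoOn (fun r : ℝ => c * r * Real.exp (1 - α * r)) (Set.Icc 0 (1 / c)) := by
  apply strictMonoOn_of_deriv_pos (convex_Icc _ _) (by fun_prop)
  intro r hr
  rw [interior_Icc] at hr
  obtain ⟨hr0, hrc⟩ := hr
  have hαr : α * r < 1 := by
    calc α * r ≤ c * r := by nlinarith
      _ < c * (1 / c) := mul_lt_mul_of_pos_left hrc hc
      _ = 1 := by field_simp
  have hderiv : HasDerivAt (fun r : ℝ => c * r * Real.exp (1 - α * r))
      (c * Real.exp (1 - α * r) * (1 - α * r)) r := by
    have hexp := (((hasDerivAt_id' r).const_mul α).const_sub 1).exp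
    exact (((hasDerivAt_id' r).const_mul c).mul hexp).congr_deriv (by ring)
  rw [hderiv.deriv]
  have := Real.exp_pos (1 - α * r)
  have : 0 < 1 - α * r := by linarith
  positivity

lemma existsUnique_mul_exp_one_sub_eq_one {c α : ℝ} (hc : 0 < c) (hαc : α ≤ c) :
    ∃! r : ℝ, 0 < r ∧ r ≤ 1 / c ∧ c * r * Real.exp (1 - α * r) = 1 := by
  set F : ℝ → ℝ := fun r => c * r * Real.exp (1 - α * r)
  have hF0 : F 0 = 0 := by simp [F]
  have hF1 : 1 ≤ F (1 / c) := by
    have : α * (1 / c) ≤ 1 := by rw [mul_one_div]; exact (div_le_one hc).2 hαc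
    simpa [F, hc.ne'] using Real.one_le_exp (by linarith : 0 ≤ 1 - α * (1 / c))
  obtain ⟨r, hr, hFr⟩ := intermediate_value_Icc (by positivity : (0 : ℝ) ≤ 1 / c)
    (by fun_prop : Continuous F).continuousOn ⟨by rw [hF0]; exact zero_le_one, hF1⟩
  have hr0 : 0 < r := hr.1.lt_of_ne (by rintro rfl; simp [hF0] at hFr)
  refine ⟨r, ⟨hr0, hr.2, hFr⟩, ?_⟩
  rintro s ⟨hs0, hsc, hFs⟩
  exact (strictMonoOn_mul_exp_one_sub hc hαc).injOn ⟨hs0.le, hsc⟩ hr (hFs.trans hFr.symm)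

def limitCurve (a b c : ℝ) : Set ℂ :=
  {z : ℂ | z.re ≤ 0 ∧ ‖z‖ ≤ 1 / c ∧ ‖(c * z * Complex.exp (1 + a * z))‖ = 1} ∪
    {z : ℂ | 0 ≤ z.re ∧ ‖z‖ ≤ 1 / c ∧ ‖(c * z * Complex.exp (1 - b * z))‖ = 1}

noncomputable def limitCurveRate (a b θ : ℝ) : ℝ :=
  if Real.cos θ ≤ 0 then -(a * Real.cos θ) else b * Real.cos θ

lemma limitCurveRate_le {a b c : ℝ} (ha : 0 ≤ a) (hb : 0 ≤ b) (hc : c = max a b) (θ : ℝ) :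
    limitCurveRate a b θ ≤ c := by
  have := Real.neg_one_le_cos θ
  have := Real.cos_le_one θ
  have := le_max_left a b
  have := le_max_right a b
  unfold limitCurveRate
  split_ifs <;> nlinarith

lemma norm_mul_mul_exp {c : ℝ} (hc : 0 ≤ c) (z w : ℂ) :
    ‖(c * z * Complex.exp w)‖ = c * ‖z‖ * Real.exp w.re := by
  rw [norm_mul, norm_mul, Complex.norm_of_nonneg hc, Complex.norm_exp]

lemma ofReal_mul_exp_mem_limitCurve_iff {a b c r : ℝ} (hc : 0 ≤ c) (hr : 0 < r) (θ : ℝ) :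
    (r : ℂ) * Complex.exp (θ * Complex.I) ∈ limitCurve a b c ↔
      r ≤ 1 / c ∧ c * r * Real.exp (1 - limitCurveRate a b θ * r) = 1 := by
  have hnorm : ‖(r : ℂ) * Complex.exp (θ * Complex.I)‖ = r := by
    rw [norm_mul, Complex.norm_of_nonneg hr.le, Complex.norm_exp_ofReal_mul_I, mul_one]
  have hre : ((r : ℂ) * Complex.exp (θ * Complex.I)).re = r * Real.cos θ := by
    simp [Complex.mul_re, Complex.exp_ofReal_mul_I_re]
  simp only [limitCurve, Set.mem_union, Set.mem_ofPred_eq, norm_mul_mul_exp hc, hnorm,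
    Complex.add_re, Complex.sub_re, Complex.one_re, Complex.re_ofReal_mul, hre]
  unfold limitCurveRate
  split_ifs with hcos
  · -- a point of the right part on this ray forces `cos θ = 0`, where both equations agree
    have hright : 0 ≤ r * Real.cos θ → Real.cos θ = 0 := fun h =>
      le_antisymm hcos (nonneg_of_mul_nonneg_right h hr)
    constructor
    · rintro (⟨-, hrc, heq⟩ | ⟨hcos0, hrc, heq⟩)
      · exact ⟨hrc, by convert heq using 3; ring⟩
      · exact ⟨hrc, by convert heq using 3; rw [hright hcos0]; ring⟩
    · rintro ⟨hrc, heq⟩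
      exact Or.inl ⟨mul_nonpos_of_nonneg_of_nonpos hr.le hcos, hrc, by convert heq using 3; ring⟩
  · have hpos : 0 < r * Real.cos θ := mul_pos hr (not_le.mp hcos)
    constructor
    · rintro (⟨hneg, -⟩ | ⟨-, hrc, heq⟩)
      · exact absurd hneg hpos.not_ge
      · exact ⟨hrc, by convert heq using 3; ring⟩
    · rintro ⟨hrc, heq⟩
      exact Or.inr ⟨hpos.le, hrc, by convert heq using 3; ring⟩

/-- Each ray from the origin meets the limit curve `D_{a,b}` in exactly one point. -/
theorem limit_curve_crosses_each_ray_once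
    (a b : ℝ) (ha : 0 < a) (hb : 0 < b) (c : ℝ) (hc : c = max a b)
    (D : Set ℂ)
    (hD : D = {z : ℂ | z.re ≤ 0 ∧ ‖z‖ ≤ 1 / c ∧
                 ‖(c * z * Complex.exp (1 + a * z))‖ = 1} ∪
              {z : ℂ | 0 ≤ z.re ∧ ‖z‖ ≤ 1 / c ∧
                 ‖(c * z * Complex.exp (1 - b * z))‖ = 1}) :
    ∀ θ ∈ Set.Ico (0 : ℝ) (2 * Real.pi),
      ∃! r : ℝ, 0 < r ∧ (r : ℂ) * Complex.exp (θ * Complex.I) ∈ D := by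
  intro θ _
  have hc0 : 0 < c := hc ▸ lt_max_of_lt_left ha
  subst hD
  exact (existsUnique_congr fun r => and_congr_right fun hr =>
      ofReal_mul_exp_mem_limitCurve_iff hc0.le hr θ).2
    (existsUnique_mul_exp_one_sub_eq_one hc0 (limitCurveRate_le ha.le hb.le hc θ))
end

section
/- Let D = {z ∈ ℂ : |z| ≤ 1 and |z e^{1-z}| = 1} be the Szegő curve. Then for every θ ∈ [0, 2π) there is a unique r ∈ (0, 1] with r e^{iθ} ∈ D, and the function r(θ) satisfies r(0) = 1 and r(π) equal to the unique solution in (0,1) of r e^{1+r} = 1. -/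
/-!
On the ray `z = r e^{iθ}` one has `|z e^{1-z}| = r e^{1 - r cos θ}`, so the curve meets the ray
where `g(r) = r e^{1 - c r} = 1` with `c = cos θ ≤ 1`. Since `g'(r) = e^{1 - c r} (1 - c r) > 0`
on `(0, 1)`, `g` increases on `[0, 1]` from `g 0 = 0` to `g 1 = e^{1 - c} ≥ 1`, which gives
exactly one solution in `(0, 1]`. For `θ = 0` it is `r = 1`; for `θ = π` it solves
`r e^{1 + r} = 1` and is not `1`.
-/

open Complex Set

def szegoCurve : Set ℂ := {z : ℂ | ‖z‖ ≤ 1 ∧ ‖z * Complex.exp (1 - z)‖ = 1}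

theorem strictMonoOn_mul_exp_one_sub_mul {c b : ℝ} (hcb : c * b ≤ 1) :
    StrictMonoOn (fun r : ℝ => r * Real.exp (1 - c * r)) (Icc 0 b) := by
  refine strictMonoOn_of_deriv_pos (convex_Icc 0 b) (by fun_prop) fun r hr => ?_
  rw [interior_Icc] at hr
  have hderiv : HasDerivAt (fun r : ℝ => r * Real.exp (1 - c * r))
      (Real.exp (1 - c * r) * (1 - c * r)) r :=
    ((hasDerivAt_id' r).mul (((hasDerivAt_id' r).const_mul c).const_sub 1).exp).congr_deriv
      (by ring)
  have hcr : c * r < 1 := by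
    rcases le_or_gt c 0 with hc | hc
    · nlinarith [hr.1]
    · nlinarith [hr.2]
  rw [hderiv.deriv]
  exact mul_pos (Real.exp_pos _) (sub_pos.2 hcr)

theorem existsUnique_mul_exp_one_sub_mul_eq_one {c : ℝ} (hc : c ≤ 1) :
    ∃! r : ℝ, r ∈ Ioc (0 : ℝ) 1 ∧ r * Real.exp (1 - c * r) = 1 := by
  have hmono := strictMonoOn_mul_exp_one_sub_mul (b := 1) (by linarith)
  have hone : (1 : ℝ) ∈ Icc (0 * Real.exp (1 - c * 0)) (1 * Real.exp (1 - c * 1)) :=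
    ⟨by simp, by simpa using Real.one_le_exp (by linarith : 0 ≤ 1 - c)⟩
  obtain ⟨r, hr, hroot⟩ := intermediate_value_Icc zero_le_one
    (f := fun r : ℝ => r * Real.exp (1 - c * r)) (by fun_prop) hone
  have hr0 : r ≠ 0 := by rintro rfl; simp at hroot
  refine ⟨r, ⟨⟨lt_of_le_of_ne hr.1 (Ne.symm hr0), hr.2⟩, hroot⟩, ?_⟩
  rintro s ⟨hs, hsroot⟩
  exact hmono.injOn (Ioc_subset_Icc_self hs) hr (hsroot.trans hroot.symm)

theorem norm_ofReal_mul_exp_mul_exp_one_sub {r : ℝ} (θ : ℝ) (hr : 0 ≤ r) :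
    ‖(r : ℂ) * exp (θ * I) * exp (1 - r * exp (θ * I))‖ =
      r * Real.exp (1 - Real.cos θ * r) := by
  have hre : (1 - r * exp (θ * I)).re = 1 - Real.cos θ * r := by
    rw [sub_re, one_re, re_ofReal_mul, exp_ofReal_mul_I_re, mul_comm]
  rw [norm_mul, norm_mul, norm_exp_ofReal_mul_I, norm_exp, hre, norm_real,
    Real.norm_of_nonneg hr, mul_one]

theorem ofReal_mul_exp_mem_szegoCurve_iff {r : ℝ} (θ : ℝ) (hr : r ∈ Ioc (0 : ℝ) 1) :
    (r : ℂ) * exp (θ * I) ∈ szegoCurve ↔ r * Real.exp (1 - Real.cos θ * r) = 1 := by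
  have hnorm : ‖(r : ℂ) * exp (θ * I)‖ = r := by
    rw [norm_mul, norm_exp_ofReal_mul_I, norm_real, Real.norm_of_nonneg hr.1.le, mul_one]
  simp only [szegoCurve, mem_ofPred_eq, hnorm, norm_ofReal_mul_exp_mul_exp_one_sub θ hr.1.le,
    hr.2, true_and]

theorem ofReal_mem_szegoCurve_iff {r : ℝ} (hr : r ∈ Ioc (0 : ℝ) 1) :
    (r : ℂ) ∈ szegoCurve ↔ r = 1 := by
  have hray := ofReal_mul_exp_mem_szegoCurve_iff 0 hr
  simp only [ofReal_zero, zero_mul, Complex.exp_zero, mul_one, Real.cos_zero, one_mul] at hray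
  rw [hray]
  refine ⟨fun h => (existsUnique_mul_exp_one_sub_mul_eq_one le_rfl).unique ⟨hr, ?_⟩
    ⟨⟨one_pos, le_rfl⟩, by simp⟩, by rintro rfl; simp⟩
  simpa using h

theorem existsUnique_mul_exp_one_add_eq_one :
    ∃! r : ℝ, r ∈ Ioo (0 : ℝ) 1 ∧ r * Real.exp (1 + r) = 1 := by
  refine (existsUnique_congr fun r => ?_).1
    (existsUnique_mul_exp_one_sub_mul_eq_one (c := -1) (by norm_num))
  rw [neg_one_mul, sub_neg_eq_add]
  refine ⟨fun ⟨hr, hroot⟩ => ⟨⟨hr.1, lt_of_le_of_ne hr.2 ?_⟩, hroot⟩,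
    fun ⟨hr, hroot⟩ => ⟨Ioo_subset_Ioc_self hr, hroot⟩⟩
  rintro rfl
  norm_num at hroot

/-- The Szegő curve `D = {|z| ≤ 1, |z e^{1-z}| = 1}` meets each ray from the origin in a
unique point `r(θ) e^{iθ}` with `r(θ) ∈ (0,1]`; moreover `r(0) = 1` and `r(π)` is the
unique solution in `(0,1)` of `r e^{1+r} = 1`. -/
theorem szego_curve_ray_parametrization
    (D : Set ℂ)
    (hD : D = {z : ℂ | ‖z‖ ≤ 1 ∧ ‖z * Complex.exp (1 - z)‖ = 1}) :
    (∀ θ ∈ Set.Ico (0 : ℝ) (2 * Real.pi),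
      ∃! r : ℝ, r ∈ Set.Ioc (0 : ℝ) 1 ∧ (r : ℂ) * Complex.exp (θ * Complex.I) ∈ D) ∧
    ((1 : ℂ) ∈ D ∧ ∀ r ∈ Set.Ioc (0 : ℝ) 1, ((r : ℂ) ∈ D ↔ r = 1)) ∧
    (∃! r : ℝ, r ∈ Set.Ioo (0 : ℝ) 1 ∧ r * Real.exp (1 + r) = 1) ∧
    (∀ r ∈ Set.Ioc (0 : ℝ) 1,
      ((r : ℂ) * Complex.exp (Real.pi * Complex.I) ∈ D ↔ r * Real.exp (1 + r) = 1)) := by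
  obtain rfl : D = szegoCurve := hD
  refine ⟨fun θ _ => ?_, ⟨?_, fun r => ofReal_mem_szegoCurve_iff⟩,
    existsUnique_mul_exp_one_add_eq_one, fun r hr => ?_⟩
  · exact (existsUnique_congr fun r =>
      and_congr_right (ofReal_mul_exp_mem_szegoCurve_iff θ)).2
        (existsUnique_mul_exp_one_sub_mul_eq_one (Real.cos_le_one θ))
  · exact_mod_cast (ofReal_mem_szegoCurve_iff ⟨one_pos, le_rfl⟩).2 rfl
  · rw [ofReal_mul_exp_mem_szegoCurve_iff Real.pi hr, Real.cos_pi, neg_one_mul, sub_neg_eq_add]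
end
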